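/- arXiv:1301.4870 — 6 statements merged into one kernel-verified Lean document; each statement's English description precedes it below -/
import Mathlib

section
/- Let p = p_n·∏_{i=1}^k (X − z_i)^{m_i} ∈ ℂ[X] be a polynomial of degree n ≥ 2 with p_n ≠ 0, distinct roots z_1,…,z_k (k ≥ 2) and multiplicities m_i. Fix i ∈ {1,…,k}, let σ_i := min_{j≠i} |z_i − z_j| and P_i := ∏_{j≠i} (z_i − z_j)^{m_j}. If 0 < r ≤ σ_i/n, then for every x ∈ ℂ with |x − z_i| = r one has |p(x)| > r^{m_i}·|p_n|·|P_i|/4. -/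
open Finset

/-- Key numeric inequality: `(1 - 1/n)^(n-1) > 1/4` for `n ≥ 2`. -/
lemma key_quarter (n : ℕ) (hn : 2 ≤ n) : (1/4 : ℝ) < (1 - 1/(n:ℝ)) ^ (n - 1) := by
  have hn2 : (2:ℝ) ≤ (n:ℝ) := by exact_mod_cast hn
  have hpos : (0:ℝ) < (n:ℝ) - 1 := by linarith
  have hb : (1 - 1/(n:ℝ)) = ((n:ℝ)/((n:ℝ)-1))⁻¹ := by
    field_simp
  have hbase : (n:ℝ)/((n:ℝ)-1) < Real.exp (1/((n:ℝ)-1)) := by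
    have h := Real.add_one_lt_exp (x := 1/((n:ℝ)-1)) (by positivity)
    have heq : (n:ℝ)/((n:ℝ)-1) = 1/((n:ℝ)-1) + 1 := by field_simp; ring
    linarith
  have hne : n - 1 ≠ 0 := by omega
  have hcpos : (0:ℝ) < ((n:ℝ)/((n:ℝ)-1)) ^ (n-1) := by positivity
  have hcast : ((n - 1 : ℕ) : ℝ) = (n:ℝ) - 1 := by
    have : 1 ≤ n := by omega
    push_cast [Nat.cast_sub this]
    ring
  have hexp : (Real.exp (1/((n:ℝ)-1))) ^ (n-1) = Real.exp 1 := by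
    rw [← Real.exp_nat_mul]
    congr 1
    rw [hcast]
    field_simp
  have hlt4 : ((n:ℝ)/((n:ℝ)-1)) ^ (n-1) < 4 := by
    have h1 : ((n:ℝ)/((n:ℝ)-1)) ^ (n-1) < (Real.exp (1/((n:ℝ)-1))) ^ (n-1) :=
      pow_lt_pow_left₀ hbase (by positivity) hne
    rw [hexp] at h1
    have := Real.exp_one_lt_d9
    linarith
  rw [hb, inv_pow, ← one_div, div_lt_div_iff₀ (by norm_num) hcpos]
  linarith

/-- Lemma 4 of the paper: a lower bound for `|p(x)|` on the boundary of a disk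
around the root `z_i` of radius `r ≤ σ_i / n`. -/
theorem stmt3 (n k : ℕ) (hn : 2 ≤ n) (hk : 2 ≤ k)
    (c : ℂ) (hc : c ≠ 0)
    (z : Fin k → ℂ) (hz : Function.Injective z)
    (m : Fin k → ℕ) (hm : ∀ j, 1 ≤ m j) (hsum : ∑ j, m j = n)
    (p : Polynomial ℂ)
    (hp : p = Polynomial.C c * ∏ j, (Polynomial.X - Polynomial.C (z j)) ^ m j)
    (i : Fin k) (σi : ℝ)
    (hσ1 : ∀ j, j ≠ i → σi ≤ ‖z i - z j‖)
    (hσ2 : ∃ j, j ≠ i ∧ σi = ‖z i - z j‖)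
    (r : ℝ) (hr : 0 < r) (hrn : r ≤ σi / n) :
    ∀ x : ℂ, ‖x - z i‖ = r →
      r ^ m i * ‖c‖ *
          ‖∏ j ∈ Finset.univ.erase i, (z i - z j) ^ m j‖ / 4
        < ‖p.eval x‖ := by
  intro x hx
  have hn2 : (2:ℝ) ≤ (n:ℝ) := by exact_mod_cast hn
  have hnpos : (0:ℝ) < (n:ℝ) := by linarith
  set ε : ℝ := 1 - 1/(n:ℝ) with hεdef
  clear_value ε
  have hε0 : 0 < ε := by
    have : 1/(n:ℝ) ≤ 1/2 := by
      apply one_div_le_one_div_of_le <;> linarith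
    simp only [hεdef]; linarith
  have hε1 : ε ≤ 1 := by
    have : 0 < 1/(n:ℝ) := by positivity
    simp only [hεdef]; linarith
  have hcpos : 0 < ‖c‖ := norm_pos_iff.mpr hc
  -- distances are positive
  have hd : ∀ j ∈ univ.erase i, 0 < ‖z i - z j‖ := by
    intro j hj
    have hji : j ≠ i := (mem_erase.mp hj).1
    exact norm_pos_iff.mpr (sub_ne_zero.mpr fun h => hji (hz h).symm)
  -- per-factor lower bound
  have hfac : ∀ j ∈ univ.erase i,
      (ε * ‖z i - z j‖) ^ m j ≤ ‖x - z j‖ ^ m j := by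
    intro j hj
    have hji : j ≠ i := (mem_erase.mp hj).1
    have hdj := hd j hj
    have htri : ‖z i - z j‖
        ≤ ‖z i - x‖ + ‖x - z j‖ :=
      norm_sub_le_norm_sub_add_norm_sub (z i) x (z j)
    have hix : ‖z i - x‖ = r := by
      rw [norm_sub_rev]; exact hx
    have h2 : r ≤ ‖z i - z j‖ / n :=
      le_trans hrn (div_le_div_of_nonneg_right (hσ1 j hji) hnpos.le)
    have hεd : ‖z i - z j‖ * ε
        = ‖z i - z j‖ - ‖z i - z j‖ / n := by
      rw [hεdef]; field_simp
    have hlow : ε * ‖z i - z j‖ ≤ ‖x - z j‖ := by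
      linarith
    exact pow_le_pow_left₀ (by positivity) hlow (m j)
  -- the product bound
  set D := ∏ j ∈ univ.erase i, ‖z i - z j‖ ^ m j with hDdef
  set Q := ∏ j ∈ univ.erase i, ‖x - z j‖ ^ m j with hQdef
  have hDpos : 0 < D := Finset.prod_pos fun j hj => pow_pos (hd j hj) _
  set S := ∑ j ∈ univ.erase i, m j with hSdef
  have hprod : ε ^ S * D ≤ Q := by
    have h1 : ∏ j ∈ univ.erase i, (ε * ‖z i - z j‖) ^ m j ≤ Q :=
      Finset.prod_le_prod (fun j hj => by positivity) hfac
    calc ε ^ S * D = ∏ j ∈ univ.erase i, (ε * ‖z i - z j‖) ^ m j := by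
          simp only [mul_pow, Finset.prod_mul_distrib, hSdef, hDdef,
            Finset.prod_pow_eq_pow_sum]
      _ ≤ Q := h1
  have hmS : m i + S = n := by
    rw [hSdef, Finset.add_sum_erase _ _ (mem_univ i), hsum]
  have hSle : S ≤ n - 1 := by have := hm i; omega
  have hεS : ε ^ (n-1) ≤ ε ^ S := pow_le_pow_of_le_one hε0.le hε1 hSle
  have hq := key_quarter n hn
  rw [← hεdef] at hq
  have hQbig : D / 4 < Q := by
    have h1 : (1/4 : ℝ) * D < ε ^ (n-1) * D :=
      (mul_lt_mul_of_pos_right hq hDpos)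
    have h2 : ε ^ (n-1) * D ≤ ε ^ S * D := mul_le_mul_of_nonneg_right hεS hDpos.le
    linarith
  -- compute |p(x)|
  have heval : ‖p.eval x‖ = ‖c‖ * (r ^ m i * Q) := by
    rw [hp]
    simp only [Polynomial.eval_mul, Polynomial.eval_C, Polynomial.eval_prod,
      Polynomial.eval_pow, Polynomial.eval_sub, Polynomial.eval_X,
      norm_mul, norm_prod, norm_pow]
    congr 1
    rw [← Finset.mul_prod_erase _ _ (mem_univ i), hx]
  have hPabs : ‖∏ j ∈ Finset.univ.erase i, (z i - z j) ^ m j‖ = D := by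
    rw [norm_prod]
    simp only [norm_pow, hDdef]
  rw [heval, hPabs]
  have hrpow : 0 < r ^ m i := pow_pos hr _
  nlinarith [mul_lt_mul_of_pos_left hQbig (mul_pos hcpos hrpow)]
end

section
/- Let p = p_n·∏_{i=1}^k (X − z_i)^{m_i} ∈ ℂ[X] be of degree n ≥ 2 with p_n ≠ 0 and k ≥ 2 distinct roots, and let τ ≥ 0 satisfy |p_i| ≤ 2^τ·|p_n| for all 0 ≤ i ≤ n−1. Let ẑ_1,…,ẑ_n ∈ ℂ and put p̂ := p_n·∏_{j=1}^n (X − ẑ_j), and suppose ‖p − p̂‖₁ ≤ 2^{−b}·‖p‖₁ for a real b with b ≥ max(8n, n·log₂ n). Assume in addition that for every i ∈ {1,…,k}: 2^{−b/(2 m_i)} ≤ 1/(2n²), 2^{−b/(2 m_i)} ≤ σ_i/(2n), and 2^{−b/2} ≤ |P_i| / (16·(n+1)·2^τ·max(1,|z_i|)^n). Then the closed disks Δ(z_i, 2^{−b/(2 m_i)}) of radius 2^{−b/(2 m_i)} centered at z_i, for i = 1,…,k, are pairwise disjoint, and for each i exactly m_i of the points ẑ_1,…,ẑ_n (counted as a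 multiset) lie in Δ(z_i, 2^{−b/(2 m_i)}). -/
open scoped Classical

open Polynomial Metric Complex

/-- The one-norm of a polynomial: the sum of the absolute values of its coefficients. -/
noncomputable def onenorm (q : Polynomial ℂ) : ℝ := ∑ i ∈ q.support, ‖q.coeff i‖



-- multiset filter_bind
lemma my_filter_bind {α β : Type*} (p : α → Prop) [DecidablePred p] (s : Multiset β)
    (f : β → Multiset α) :
    Multiset.filter p (s.bind f) = s.bind fun b => (f b).filter p := by
  induction s using Multiset.induction_on with
  | empty => simp
  | cons a s ih => simp [Multiset.bind_cons, Multiset.filter_add, ih]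

-- eval bound via onenorm
lemma abs_eval_le (q : Polynomial ℂ) (x : ℂ) (n : ℕ) (hq : q.natDegree ≤ n) :
    ‖q.eval x‖ ≤ onenorm q * max 1 (‖x‖) ^ n := by
  rw [eval_eq_sum, Polynomial.sum]
  refine le_trans (norm_sum_le _ _) ?_
  rw [onenorm, Finset.sum_mul]
  refine Finset.sum_le_sum fun i hi => ?_
  rw [norm_mul, norm_pow]
  refine mul_le_mul_of_nonneg_left ?_ (norm_nonneg _)
  calc ‖x‖ ^ i ≤ max 1 (‖x‖) ^ i := by
        exact pow_le_pow_left₀ (norm_nonneg _) (le_max_right _ _) _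
    _ ≤ max 1 (‖x‖) ^ n :=
        pow_le_pow_right₀ (le_max_left _ _) (le_trans (Polynomial.le_natDegree_of_mem_supp i hi) hq)

lemma onenorm_sub_comm (p q : Polynomial ℂ) : onenorm (p - q) = onenorm (q - p) := by
  rw [← neg_sub p q, onenorm, onenorm, Polynomial.support_neg]
  refine Finset.sum_congr rfl fun i _ => ?_
  rw [Polynomial.coeff_neg, norm_neg]


-- log derivative of multiset product
lemma eval_derivative_multiset_prod (R : Multiset ℂ) (x : ℂ) (hx : ∀ w ∈ R, x ≠ w) :
    Polynomial.eval x (Polynomial.derivative (R.map fun w => X - C w).prod) =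
      Polynomial.eval x (R.map fun w => X - C w).prod * (R.map fun w => (x - w)⁻¹).sum := by
  induction R using Multiset.induction_on with
  | empty => simp
  | cons a s ih =>
    have hxa : x - a ≠ 0 := sub_ne_zero.2 (hx a (Multiset.mem_cons_self a s))
    have ihs := ih (fun w hw => hx w (Multiset.mem_cons_of_mem hw))
    simp only [Multiset.map_cons, Multiset.prod_cons, Multiset.sum_cons, derivative_mul,
      eval_add, eval_mul, eval_sub, eval_X, eval_C, derivative_sub, derivative_X, derivative_C,
      sub_zero, eval_one, one_mul, ihs]
    field_simp

lemma continuousOn_inv_sum (R : Multiset ℂ) (s : Set ℂ) (hR : ∀ w ∈ R, ∀ x ∈ s, x ≠ w) :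
    ContinuousOn (fun x => (R.map fun w => (x - w)⁻¹).sum) s := by
  induction R using Multiset.induction_on with
  | empty => simpa using continuousOn_const
  | cons a t ih =>
    simp only [Multiset.map_cons, Multiset.sum_cons]
    refine ContinuousOn.add ?_ (ih fun w hw => hR w (Multiset.mem_cons_of_mem hw))
    exact ContinuousOn.inv₀ (continuousOn_id.sub continuousOn_const)
      (fun x hx => sub_ne_zero.2 (hR a (Multiset.mem_cons_self a t) x hx))

lemma my_circleIntegral_add {E : Type*} [NormedAddCommGroup E] [NormedSpace ℂ E] {f g : ℂ → E}
    {c : ℂ} {R : ℝ} (hf : CircleIntegrable f c R) (hg : CircleIntegrable g c R) :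
    (∮ z in C(c, R), (f z + g z)) = (∮ z in C(c, R), f z) + ∮ z in C(c, R), g z := by
  simp only [circleIntegral, smul_add, intervalIntegral.integral_add hf.out hg.out]

-- integral of a single term
lemma integral_inv_term (z w : ℂ) (r : ℝ) (hr : 0 < r) (hw : w ∉ sphere z r) :
    (∮ x in C(z, r), (x - w)⁻¹) =
      if w ∈ ball z r then (2 * Real.pi * Complex.I) else 0 := by
  by_cases h : w ∈ ball z r
  · rw [if_pos h]
    exact circleIntegral.integral_sub_inv_of_mem_ball h
  · rw [if_neg h]
    have hw' : w ∉ closedBall z r := by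
      intro hc
      rcases lt_or_eq_of_le (mem_closedBall.1 hc) with h' | h'
      · exact h (mem_ball.2 h')
      · exact hw (mem_sphere.2 h')
    refine Complex.circleIntegral_eq_zero_of_differentiable_on_off_countable hr.le
      Set.countable_empty ?_ ?_
    · refine ContinuousOn.inv₀ (continuousOn_id.sub continuousOn_const) fun x hx => ?_
      exact sub_ne_zero.2 fun hxw => hw' (hxw ▸ hx)
    · intro x hx
      refine DifferentiableAt.inv (differentiableAt_id.sub_const w) ?_
      exact sub_ne_zero.2 fun hxw => hw' (hxw ▸ ball_subset_closedBall hx.1)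

-- integral of the multiset sum
lemma integral_inv_sum (R : Multiset ℂ) (z : ℂ) (r : ℝ) (hr : 0 < r)
    (hR : ∀ w ∈ R, w ∉ sphere z r) :
    (∮ x in C(z, r), (R.map fun w => (x - w)⁻¹).sum) =
      2 * Real.pi * Complex.I * ((R.filter fun w => w ∈ ball z r).card : ℂ) := by
  induction R using Multiset.induction_on with
  | empty =>
    simp only [Multiset.map_zero, Multiset.sum_zero, Multiset.filter_zero, Multiset.card_zero,
      Nat.cast_zero, mul_zero]
    have : (fun x : ℂ => (0 : ℂ)) = fun x => (0:ℂ) • (1:ℂ) := by funext x; simp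
    rw [show (∮ _ in C(z, r), (0:ℂ)) = ∮ x in C(z, r), (0:ℂ) • (1:ℂ) from by rw [← this],
      circleIntegral.integral_smul]
    simp
  | cons a t ih =>
    have ha : a ∉ sphere z r := hR a (Multiset.mem_cons_self a t)
    have hts : ∀ w ∈ t, w ∉ sphere z r := fun w hw => hR w (Multiset.mem_cons_of_mem hw)
    have hint1 : CircleIntegrable (fun x => (x - a)⁻¹) z r := by
      refine ContinuousOn.circleIntegrable hr.le ?_
      refine ContinuousOn.inv₀ (continuousOn_id.sub continuousOn_const) fun x hx => ?_
      exact sub_ne_zero.2 fun h => ha (h ▸ hx)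
    have hint2 : CircleIntegrable (fun x => (t.map fun w => (x - w)⁻¹).sum) z r := by
      refine ContinuousOn.circleIntegrable hr.le ?_
      exact continuousOn_inv_sum t _ (fun w hw x hx h => hts w hw (h ▸ hx))
    have step : (∮ x in C(z, r), ((x - a)⁻¹ + (t.map fun w => (x - w)⁻¹).sum)) =
        (∮ x in C(z, r), (x - a)⁻¹) + ∮ x in C(z, r), (t.map fun w => (x - w)⁻¹).sum :=
      my_circleIntegral_add hint1 hint2
    simp only [Multiset.map_cons, Multiset.sum_cons]
    rw [step, ih hts, integral_inv_term z a r hr ha]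
    by_cases h : a ∈ ball z r
    · rw [if_pos h, Multiset.filter_cons_of_pos _ h, Multiset.card_cons]
      push_cast
      ring
    · rw [if_neg h, Multiset.filter_cons_of_neg _ h, zero_add]


lemma count_integral (q : Polynomial ℂ) (z : ℂ) (r : ℝ) (hr : 0 < r)
    (hs : ∀ x ∈ sphere z r, Polynomial.eval x q ≠ 0) :
    (∮ x in C(z, r), Polynomial.eval x (Polynomial.derivative q) / Polynomial.eval x q) =
      2 * Real.pi * Complex.I * ((q.roots.filter fun w => w ∈ ball z r).card : ℂ) := by
  have hcard : Multiset.card q.roots = q.natDegree :=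
    Polynomial.splits_iff_card_roots.mp (IsAlgClosed.splits q)
  have hfac := Polynomial.C_leadingCoeff_mul_prod_multiset_X_sub_C hcard
  have hroots_sphere : ∀ w ∈ q.roots, w ∉ sphere z r := by
    intro w hw hws
    exact hs w hws ((Polynomial.isRoot_of_mem_roots hw))
  have hcong : Set.EqOn (fun x => Polynomial.eval x (Polynomial.derivative q) / Polynomial.eval x q)
      (fun x => (q.roots.map fun w => (x - w)⁻¹).sum) (sphere z r) := by
    intro x hx
    have hxq : Polynomial.eval x q ≠ 0 := hs x hx
    have hxw : ∀ w ∈ q.roots, x ≠ w := by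
      intro w hw hxe
      exact hxq (hxe ▸ (Polynomial.isRoot_of_mem_roots hw))
    have e1 : Polynomial.eval x q =
        q.leadingCoeff * Polynomial.eval x (q.roots.map fun w => X - C w).prod := by
      conv_lhs => rw [← hfac]
      rw [Polynomial.eval_C_mul]
    have e2 : Polynomial.eval x (Polynomial.derivative q) =
        q.leadingCoeff * Polynomial.eval x (Polynomial.derivative (q.roots.map fun w => X - C w).prod) := by
      conv_lhs => rw [← hfac]
      rw [Polynomial.derivative_C_mul, Polynomial.eval_C_mul]
    have h1 : Polynomial.eval x (Polynomial.derivative q) =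
        Polynomial.eval x q * (q.roots.map fun w => (x - w)⁻¹).sum := by
      rw [e2, eval_derivative_multiset_prod _ _ hxw, e1]
      ring
    simp only [h1]
    field_simp
  rw [circleIntegral.integral_congr hr.le hcong, integral_inv_sum _ _ _ hr hroots_sphere]


lemma homotopy_count (p₀ p₁ : Polynomial ℂ) (z : ℂ) (r : ℝ) (hr : 0 < r)
    (δ₀ : ℝ) (hδ₀ : 0 < δ₀)
    (hKI : ∀ t : ℝ, t ∈ Set.Icc (0:ℝ) 1 → ∀ x ∈ sphere z r,
      δ₀ ≤ ‖Polynomial.eval x (p₀ + Polynomial.C (t:ℂ) * (p₁ - p₀))‖) :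
    ((p₀.roots.filter fun w => w ∈ ball z r).card =
     (p₁.roots.filter fun w => w ∈ ball z r).card) := by
  set D : Polynomial ℂ := p₁ - p₀ with hD
  set q : ℝ → Polynomial ℂ := fun t => p₀ + Polynomial.C (t:ℂ) * D with hq
  set N : ℝ → ℕ := fun t => (((q t).roots).filter fun w => w ∈ ball z r).card with hN
  have hsphere : ∀ t ∈ Set.Icc (0:ℝ) 1, ∀ x ∈ sphere z r, Polynomial.eval x (q t) ≠ 0 := by
    intro t ht x hx h0
    have := hKI t ht x hx
    rw [h0] at this
    simp only [norm_zero] at this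
    linarith
  -- continuity setup
  have hconteval : ∀ u : Polynomial ℂ, Continuous fun x : ℂ => Polynomial.eval x u := by
    intro u
    exact u.continuous
  set g : ℂ → ℂ := fun x => Polynomial.eval x (Polynomial.derivative D) * Polynomial.eval x p₀
      - Polynomial.eval x (Polynomial.derivative p₀) * Polynomial.eval x D with hg
  obtain ⟨M, hM⟩ := (isCompact_sphere z r).exists_bound_of_continuousOn
    (((hconteval _).mul (hconteval _)).sub ((hconteval _).mul (hconteval _))).continuousOn
  set M' : ℝ := max M 1 with hM'
  have hM'1 : (1:ℝ) ≤ M' := le_max_right _ _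
  have hM'0 : (0:ℝ) < M' := lt_of_lt_of_le one_pos hM'1
  have hMg : ∀ x ∈ sphere z r, ‖g x‖ ≤ M' := fun x hx =>
    le_trans (hM x hx) (le_max_left _ _)
  set δ : ℝ := δ₀^2 / (2 * r * M') with hδ
  have hδpos : 0 < δ := by positivity
  -- evaluation of q t
  have hevalq : ∀ (t : ℝ) (x : ℂ), Polynomial.eval x (q t)
      = Polynomial.eval x p₀ + (t:ℂ) * Polynomial.eval x D := by
    intro t x; simp [hq]
  have hderivq : ∀ (t : ℝ) (x : ℂ), Polynomial.eval x (Polynomial.derivative (q t))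
      = Polynomial.eval x (Polynomial.derivative p₀)
        + (t:ℂ) * Polynomial.eval x (Polynomial.derivative D) := by
    intro t x; simp [hq, derivative_add, derivative_C_mul]
  -- main step
  have hstep : ∀ t ∈ Set.Icc (0:ℝ) 1, ∀ s ∈ Set.Icc (0:ℝ) 1, |t - s| ≤ δ → N t = N s := by
    intro t ht s hs hts
    by_contra hne
    set ft : ℂ → ℂ := fun x =>
      Polynomial.eval x (Polynomial.derivative (q t)) / Polynomial.eval x (q t) with hft
    set fs : ℂ → ℂ := fun x =>
      Polynomial.eval x (Polynomial.derivative (q s)) / Polynomial.eval x (q s) with hfs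
    have hcont : ∀ u ∈ Set.Icc (0:ℝ) 1, ContinuousOn (fun x =>
        Polynomial.eval x (Polynomial.derivative (q u)) / Polynomial.eval x (q u))
        (sphere z r) :=
      fun u hu => ((hconteval _).continuousOn).div ((hconteval _).continuousOn)
        (hsphere u hu)
    have hint : ∀ u ∈ Set.Icc (0:ℝ) 1, CircleIntegrable (fun x =>
        Polynomial.eval x (Polynomial.derivative (q u)) / Polynomial.eval x (q u)) z r :=
      fun u hu => ContinuousOn.circleIntegrable hr.le (hcont u hu)
    have hFt := count_integral (q t) z r hr (hsphere t ht)
    have hFs := count_integral (q s) z r hr (hsphere s hs)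
    have hdiff : (∮ x in C(z, r), (ft x - fs x))
        = 2 * Real.pi * Complex.I * ((N t : ℂ) - (N s : ℂ)) := by
      rw [circleIntegral.integral_sub (hint t ht) (hint s hs), hFt, hFs]
      ring
    -- pointwise bound
    have hbound : ∀ x ∈ sphere z r, ‖ft x - fs x‖ ≤ δ * M' / (δ₀ * δ₀) := by
      intro x hx
      have hqt : Polynomial.eval x (q t) ≠ 0 := hsphere t ht x hx
      have hqs : Polynomial.eval x (q s) ≠ 0 := hsphere s hs x hx
      have hqta : δ₀ ≤ ‖Polynomial.eval x (q t)‖ := hKI t ht x hx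
      have hqsa : δ₀ ≤ ‖Polynomial.eval x (q s)‖ := hKI s hs x hx
      have heq : ft x - fs x = ((t:ℂ) - (s:ℂ)) * g x
          / (Polynomial.eval x (q t) * Polynomial.eval x (q s)) := by
        rw [hft, hfs]
        simp only
        rw [div_sub_div _ _ hqt hqs, hevalq t x, hevalq s x, hderivq t x, hderivq s x, hg]
        congr 1
        ring
      rw [heq]
      have h1 : ‖((t:ℂ) - (s:ℂ)) * g x‖ ≤ δ * M' := by
        rw [norm_mul]
        have : ‖((t:ℂ) - (s:ℂ))‖ = |t - s| := by
          rw [show ((t:ℂ) - (s:ℂ)) = ((t - s : ℝ) : ℂ) by push_cast; ring]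
          exact Complex.norm_real _
        rw [this]
        have := hMg x hx
        exact mul_le_mul hts this (norm_nonneg _) hδpos.le
      have h2 : δ₀ * δ₀ ≤ ‖Polynomial.eval x (q t) * Polynomial.eval x (q s)‖ := by
        rw [norm_mul]
        exact mul_le_mul hqta hqsa hδ₀.le (norm_nonneg _)
      rw [norm_div]
      exact div_le_div₀ (by positivity) h1 (by positivity) h2
    have hnormle : ‖∮ x in C(z, r), (ft x - fs x)‖ ≤ 2 * Real.pi * r * (δ * M' / (δ₀ * δ₀)) := by
      exact circleIntegral.norm_integral_le_of_norm_le_const hr.le hbound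
    rw [hdiff] at hnormle
    have hlhs : ‖(2 : ℂ) * Real.pi * Complex.I * ((N t : ℂ) - (N s : ℂ))‖
        = 2 * Real.pi * ‖((N t : ℂ) - (N s : ℂ))‖ := by
      rw [norm_mul, norm_mul, norm_mul]
      simp [Real.pi_nonneg]
    have hge : (1:ℝ) ≤ ‖((N t : ℂ) - (N s : ℂ))‖ := by
      have hk : (N t : ℤ) - (N s : ℤ) ≠ 0 :=
        sub_ne_zero.2 (fun h => hne (by exact_mod_cast h))
      have h1 : (1:ℤ) ≤ |(N t : ℤ) - (N s : ℤ)| := Int.one_le_abs hk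
      calc (1:ℝ) ≤ |(((N t : ℤ) - (N s : ℤ) : ℤ) : ℝ)| := by
            rw [← Int.cast_abs]; exact_mod_cast h1
        _ = ‖((((N t : ℤ) - (N s : ℤ) : ℤ)) : ℂ)‖ := (Complex.norm_intCast _).symm
        _ = ‖((N t : ℂ) - (N s : ℂ))‖ := by
            congr 1
            push_cast
            ring
    rw [hlhs] at hnormle
    have hrhs : 2 * Real.pi * r * (δ * M' / (δ₀ * δ₀)) = Real.pi := by
      rw [hδ]; field_simp
    rw [hrhs] at hnormle
    nlinarith [Real.pi_pos, hge, hnormle]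
  -- stepping
  have hkey : ∀ j : ℕ, N (min 1 (j * δ)) = N 0 := by
    intro j
    induction j with
    | zero => simp
    | succ j ih =>
      rw [← ih]
      have hmem : ∀ a : ℝ, 0 ≤ a → min 1 a ∈ Set.Icc (0:ℝ) 1 :=
        fun a ha => ⟨le_min one_pos.le ha, min_le_left _ _⟩
      apply hstep _ (hmem _ (by positivity)) _ (hmem _ (by positivity))
      have hmono : min 1 ((j:ℝ) * δ) ≤ min 1 ((j+1:ℕ) * δ) := by
        apply min_le_min le_rfl
        have : (j:ℝ) ≤ ((j+1:ℕ):ℝ) := by push_cast; linarith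
        exact mul_le_mul_of_nonneg_right this hδpos.le
      rw [_root_.abs_of_nonneg (by linarith : (0:ℝ) ≤ min 1 (((j+1:ℕ):ℝ) * δ) - min 1 ((j:ℝ) * δ))]
      have : min 1 (((j+1:ℕ):ℝ) * δ) ≤ min 1 ((j:ℝ) * δ) + δ := by
        have h1 : (((j+1:ℕ):ℝ) * δ) = (j:ℝ) * δ + δ := by push_cast; ring
        rw [h1, ← min_add_add_right]
        exact min_le_min (by linarith) le_rfl
      linarith
  have hN1 : N 1 = N 0 := by
    have hj := hkey ⌈1/δ⌉₊
    have h1 : (1:ℝ) ≤ (⌈1/δ⌉₊ : ℝ) * δ := by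
      have := Nat.le_ceil (1/δ)
      calc (1:ℝ) = (1/δ) * δ := by field_simp
        _ ≤ (⌈1/δ⌉₊ : ℝ) * δ := mul_le_mul_of_nonneg_right this hδpos.le
    rwa [min_eq_left h1] at hj
  have hq0 : q 0 = p₀ := by simp [hq]
  have hq1 : q 1 = p₁ := by simp [hq, hD]
  have h0 : N 0 = Multiset.card (Multiset.filter (fun w => w ∈ ball z r) p₀.roots) := by
    simp only [hN]; rw [hq0]
  have h1 : N 1 = Multiset.card (Multiset.filter (fun w => w ∈ ball z r) p₁.roots) := by
    simp only [hN]; rw [hq1]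
  rw [← h0, ← h1]
  exact hN1.symm


lemma exp_quarter_le : Real.exp ((1:ℝ)/4) ≤ 4/3 := by
  have ha := Real.add_one_le_exp (-(1/4):ℝ)
  have hb : Real.exp (-(1/4):ℝ) * Real.exp ((1/4):ℝ) = 1 := by
    rw [← Real.exp_add]; norm_num
  nlinarith [Real.exp_pos ((1/4):ℝ), Real.exp_pos (-(1/4):ℝ)]

/-- structure facts -/
lemma poly_facts (n k : ℕ) (c : ℂ) (hc : c ≠ 0) (z : Fin k → ℂ) (m : Fin k → ℕ)
    (hsum : ∑ j, m j = n) (p : Polynomial ℂ)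
    (hp : p = Polynomial.C c * ∏ j, (Polynomial.X - Polynomial.C (z j)) ^ m j) :
    p.natDegree = n ∧ p.coeff n = c ∧
      p.roots = Finset.univ.val.bind (fun j => m j • ({z j} : Multiset ℂ)) ∧
      ∀ x : ℂ, p.eval x = c * ∏ j, (x - z j) ^ m j := by
  have hfac : ∀ j : Fin k, ((Polynomial.X - Polynomial.C (z j)) ^ m j).Monic :=
    fun j => (monic_X_sub_C (z j)).pow (m j)
  have hmonic : (∏ j, (Polynomial.X - Polynomial.C (z j)) ^ m j : Polynomial ℂ).Monic :=
    monic_prod_of_monic _ _ fun j _ => hfac j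
  have hdeg : p.natDegree = n := by
    rw [hp, Polynomial.natDegree_C_mul hc, Polynomial.natDegree_prod _ _
      (fun j _ => (hfac j).ne_zero)]
    simp only [Polynomial.natDegree_pow, Polynomial.natDegree_X_sub_C, mul_one]
    exact hsum
  refine ⟨hdeg, ?_, ?_, ?_⟩
  · have : p.coeff p.natDegree = p.leadingCoeff := rfl
    rw [← hdeg, this, hp, Polynomial.leadingCoeff_mul, Polynomial.leadingCoeff_C,
      hmonic.leadingCoeff, mul_one]
  · rw [hp, Polynomial.roots_C_mul _ hc,
      Polynomial.roots_prod _ _ hmonic.ne_zero]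
    congr 1
    funext j
    rw [Polynomial.roots_pow, Polynomial.roots_X_sub_C]
  · intro x
    rw [hp]
    simp [Polynomial.eval_prod]

set_option maxHeartbeats 2000000

/-- Lemma 5 of the paper: if `p̂ = p_n·∏ (X − ẑ_j)` approximates `p` to relative
error `2^{-b}` and `b` is large enough, then the disks `Δ(z_i, 2^{-b/(2m_i)})`
are pairwise disjoint and each contains exactly `m_i` of the approximations. -/
theorem stmt4 (n k : ℕ) (hn : 2 ≤ n) (hk : 2 ≤ k)
    (c : ℂ) (hc : c ≠ 0)
    (z : Fin k → ℂ) (hz : Function.Injective z)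
    (m : Fin k → ℕ) (hm : ∀ j, 1 ≤ m j) (hsum : ∑ j, m j = n)
    (p : Polynomial ℂ)
    (hp : p = Polynomial.C c * ∏ j, (Polynomial.X - Polynomial.C (z j)) ^ m j)
    (τ : ℝ) (hτ0 : 0 ≤ τ)
    (hτ : ∀ i < n, ‖p.coeff i‖ ≤ 2 ^ τ * ‖c‖)
    (σ : Fin k → ℝ)
    (hσ1 : ∀ i j, j ≠ i → σ i ≤ ‖z i - z j‖)
    (hσ2 : ∀ i, ∃ j, j ≠ i ∧ σ i = ‖z i - z j‖)
    (zh : Fin n → ℂ) (ph : Polynomial ℂ)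
    (hph : ph = Polynomial.C c * ∏ j, (Polynomial.X - Polynomial.C (zh j)))
    (b : ℝ) (hb : max (8 * (n : ℝ)) ((n : ℝ) * Real.logb 2 n) ≤ b)
    (hnorm : onenorm (p - ph) ≤ 2 ^ (-b) * onenorm p)
    (h1 : ∀ i, (2 : ℝ) ^ (-b / (2 * (m i : ℝ))) ≤ 1 / (2 * (n : ℝ) ^ 2))
    (h2 : ∀ i, (2 : ℝ) ^ (-b / (2 * (m i : ℝ))) ≤ σ i / (2 * n))
    (h3 : ∀ i, (2 : ℝ) ^ (-b / 2) ≤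
        ‖∏ j ∈ Finset.univ.erase i, (z i - z j) ^ m j‖ /
          (16 * ((n : ℝ) + 1) * 2 ^ τ * max 1 ‖z i‖ ^ n)) :
    (∀ i j : Fin k, i ≠ j →
        Disjoint (Metric.closedBall (z i) ((2 : ℝ) ^ (-b / (2 * (m i : ℝ)))))
          (Metric.closedBall (z j) ((2 : ℝ) ^ (-b / (2 * (m j : ℝ))))))
    ∧ ∀ i : Fin k,
        (Finset.univ.filter fun ℓ : Fin n =>
            zh ℓ ∈ Metric.closedBall (z i) ((2 : ℝ) ^ (-b / (2 * (m i : ℝ))))).card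
          = m i := by
  have hn0 : (0:ℝ) < n := by positivity
  have hn2 : (2:ℝ) ≤ n := by exact_mod_cast hn
  obtain ⟨r, hr'⟩ : ∃ r : Fin k → ℝ, ∀ i, r i = (2 : ℝ) ^ (-b / (2 * (m i : ℝ))) :=
    ⟨_, fun _ => rfl⟩
  simp only [show ∀ i, (2 : ℝ) ^ (-b / (2 * (m i : ℝ))) = r i from fun i => (hr' i).symm]
  have hrpos : ∀ i, 0 < r i := fun i => (hr' i) ▸ Real.rpow_pos_of_pos two_pos _
  have hzne : ∀ i j : Fin k, j ≠ i → z i - z j ≠ 0 := by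
    intro i j hij
    exact sub_ne_zero.2 fun h => hij (hz h.symm)
  have habs_sub : ∀ i j : Fin k, ‖z i - z j‖ = ‖z j - z i‖ :=
    fun i j => norm_sub_rev _ _
  have hσpos : ∀ i, 0 < σ i := by
    intro i
    obtain ⟨j, hj, hσ⟩ := hσ2 i
    rw [hσ]
    exact norm_pos_iff.mpr (hzne i j hj)
  have hrσ : ∀ i, r i ≤ σ i / (2 * n) := fun i => (hr' i) ▸ h2 i
  have hrd : ∀ i j, j ≠ i → r i ≤ ‖z i - z j‖ / (2 * n) := by
    intro i j hij
    refine le_trans (hrσ i) ?_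
    apply div_le_div_of_nonneg_right ?_ (by positivity)
    · exact hσ1 i j hij
  -- part 1 : disjointness
  have part1 : ∀ i j : Fin k, i ≠ j →
      Disjoint (Metric.closedBall (z i) (r i)) (Metric.closedBall (z j) (r j)) := by
    intro i j hij
    apply Metric.closedBall_disjoint_closedBall
    have hd : dist (z i) (z j) = ‖z i - z j‖ := Complex.dist_eq _ _
    have hdpos : 0 < ‖z i - z j‖ := norm_pos_iff.mpr (hzne i j hij.symm)
    have h1' : r i ≤ ‖z i - z j‖ / (2 * n) := hrd i j hij.symm
    have h2' : r j ≤ ‖z i - z j‖ / (2 * n) := by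
      refine le_trans (hrd j i hij) ?_
      rw [habs_sub i j]
    have h4 : ‖z i - z j‖ / (2 * n) ≤ ‖z i - z j‖ / 4 := by
      apply div_le_div_of_nonneg_left hdpos.le (by norm_num) (by linarith)
    rw [hd]
    have := hdpos
    linarith [le_trans h1' h4, le_trans h2' h4]
  refine ⟨part1, ?_⟩
  -- facts about p and ph
  obtain ⟨hdegp, hcp, hrootsp, hevalp⟩ := poly_facts n k c hc z m hsum p hp
  have hsum1 : (∑ _j : Fin n, 1) = n := by simp
  obtain ⟨hdegph, hcph, hrootsph, hevalph⟩ := poly_facts n n c hc zh (fun _ => 1) hsum1 ph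
    (by simpa using hph)
  have hrootsph' : ph.roots = Finset.univ.val.map zh := by
    rw [hrootsph]
    simp [Multiset.bind_singleton]
  intro i
  have hmi1 : 1 ≤ m i := hm i
  have hripos : 0 < r i := hrpos i
  set PiA : ℝ := ‖∏ j ∈ Finset.univ.erase i, (z i - z j) ^ m j‖ with hPiAdef
  set v : ℝ := max 1 (‖z i‖) with hvdef
  have hv1 : (1:ℝ) ≤ v := le_max_left _ _
  have hPiA_eq : PiA = ∏ j ∈ Finset.univ.erase i, ‖z i - z j‖ ^ m j := by
    rw [hPiAdef, norm_prod]
    simp [norm_pow]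
  have hPiApos : 0 < PiA := by
    rw [hPiA_eq]
    apply Finset.prod_pos
    intro j hj
    exact pow_pos (norm_pos_iff.mpr (hzne i j (Finset.ne_of_mem_erase hj))) _
  have h2τpos : (0:ℝ) < 2 ^ τ := Real.rpow_pos_of_pos two_pos _
  have hvnpos : (0:ℝ) < v ^ n := by positivity
  have hA : (2:ℝ)^(-b/2) * (16 * ((n:ℝ)+1) * 2^τ * v^n) ≤ PiA := by
    have hden : (0:ℝ) < 16 * ((n:ℝ)+1) * 2^τ * v^n := by positivity
    have h3i := h3 i
    rw [le_div_iff₀ hden] at h3i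
    exact h3i
  have hrm : r i ^ m i = (2:ℝ) ^ (-b/2) := by
    rw [hr' i, ← Real.rpow_natCast ((2:ℝ) ^ (-b / (2 * (m i:ℝ)))) (m i),
      ← Real.rpow_mul (by norm_num : (0:ℝ) ≤ 2)]
    congr 1
    have hmne : (m i:ℝ) ≠ 0 := by positivity
    field_simp
  have habsc : 0 < ‖c‖ := norm_pos_iff.mpr hc
  have honep : onenorm p ≤ ((n:ℝ)+1) * 2^τ * ‖c‖ := by
    have hsupp : p.support ⊆ Finset.range (n+1) := by
      have := p.supp_subset_range_natDegree_succ
      rwa [hdegp] at this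
    have h2τ1 : (1:ℝ) ≤ 2^τ := by
      rw [show (1:ℝ) = (2:ℝ)^(0:ℝ) by simp]
      exact Real.rpow_le_rpow_of_exponent_le one_le_two hτ0
    calc onenorm p ≤ ∑ j ∈ Finset.range (n+1), ‖p.coeff j‖ :=
        Finset.sum_le_sum_of_subset_of_nonneg hsupp
          (fun _ _ _ => norm_nonneg _)
      _ ≤ ∑ _j ∈ Finset.range (n+1), 2^τ * ‖c‖ := by
          apply Finset.sum_le_sum
          intro j hj
          rcases lt_or_eq_of_le (Nat.lt_succ_iff.mp (Finset.mem_range.mp hj)) with h | h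
          · exact hτ j h
          · rw [h, hcp]
            nlinarith [norm_nonneg c]
      _ = ((n:ℝ)+1) * 2^τ * ‖c‖ := by
          rw [Finset.sum_const, Finset.card_range, nsmul_eq_mul]
          push_cast; ring
  set δ₀ : ℝ := ‖c‖ * (2:ℝ)^(-b/2) * PiA * (5/12) with hδ₀def
  have hδ₀pos : 0 < δ₀ := by
    rw [hδ₀def]
    have : (0:ℝ) < (2:ℝ)^(-b/2) := Real.rpow_pos_of_pos two_pos _
    positivity
  -- Key inequality on the sphere
  have hKI : ∀ t : ℝ, t ∈ Set.Icc (0:ℝ) 1 → ∀ x ∈ sphere (z i) (r i),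
      δ₀ ≤ ‖Polynomial.eval x (p + Polynomial.C (t:ℂ) * (ph - p))‖ := by
    intro t ht x hx
    have hxd : ‖x - z i‖ = r i := by
      rw [← Complex.dist_eq]
      exact mem_sphere.mp hx
    -- lower bound for |p(x)|
    have hfactor : ∀ j ∈ Finset.univ.erase i,
        (1 - 1/(2*(n:ℝ))) * ‖z i - z j‖ ≤ ‖x - z j‖ := by
      intro j hj
      have hji : j ≠ i := Finset.ne_of_mem_erase hj
      have htri : ‖z i - z j‖
          ≤ ‖z i - x‖ + ‖x - z j‖ := by
        have hrw : z i - z j = (z i - x) + (x - z j) := by ring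
        rw [hrw]
        exact norm_add_le _ _
      have hzx : ‖z i - x‖ = r i := by
        rw [norm_sub_rev]
        exact hxd
      have hrle : r i ≤ ‖z i - z j‖ / (2*n) := hrd i j hji
      have hexp : (1 - 1/(2*(n:ℝ))) * ‖z i - z j‖
          = ‖z i - z j‖ - ‖z i - z j‖ / (2*n) := by
        field_simp
      rw [hexp]
      linarith [htri, hzx ▸ hrle]
    have ha0 : (0:ℝ) ≤ 1 - 1/(2*(n:ℝ)) := by
      have : 1/(2*(n:ℝ)) ≤ 1/4 := by
        apply div_le_div_of_nonneg_left one_pos.le (by norm_num) (by linarith)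
      linarith
    have ha1 : 1 - 1/(2*(n:ℝ)) ≤ 1 := by
      have : (0:ℝ) < 1/(2*(n:ℝ)) := by positivity
      linarith
    have hs_le : (∑ j ∈ Finset.univ.erase i, m j) ≤ n := by
      rw [← hsum]
      exact Finset.sum_le_sum_of_subset (Finset.erase_subset _ _)
    have hhalf : (1:ℝ)/2 ≤ (1 - 1/(2*(n:ℝ))) ^ (∑ j ∈ Finset.univ.erase i, m j) := by
      have hbern := one_add_mul_le_pow
        (show (-2:ℝ) ≤ -(1/(2*(n:ℝ))) by
          have : (0:ℝ) < 1/(2*(n:ℝ)) := by positivity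
          have : 1/(2*(n:ℝ)) ≤ 1/4 := by
            apply div_le_div_of_nonneg_left one_pos.le (by norm_num) (by linarith)
          linarith) n
      have heval : 1 + (n:ℝ) * (-(1/(2*(n:ℝ)))) = 1/2 := by
        have hne : (n:ℝ) ≠ 0 := by positivity
        field_simp
        ring
      have hbn : (1:ℝ)/2 ≤ (1 - 1/(2*(n:ℝ)))^n := by
        calc (1:ℝ)/2 = 1 + (n:ℝ) * (-(1/(2*(n:ℝ)))) := heval.symm
          _ ≤ (1 + -(1/(2*(n:ℝ))))^n := hbern
          _ = (1 - 1/(2*(n:ℝ)))^n := by ring_nf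
      calc (1:ℝ)/2 ≤ (1 - 1/(2*(n:ℝ)))^n := hbn
        _ ≤ (1 - 1/(2*(n:ℝ))) ^ (∑ j ∈ Finset.univ.erase i, m j) :=
            pow_le_pow_of_le_one ha0 ha1 hs_le
    have hprod_lower : (1/2) * PiA
        ≤ ∏ j ∈ Finset.univ.erase i, ‖x - z j‖ ^ m j := by
      have hstep : ∏ j ∈ Finset.univ.erase i,
          ((1 - 1/(2*(n:ℝ))) * ‖z i - z j‖) ^ m j
          ≤ ∏ j ∈ Finset.univ.erase i, ‖x - z j‖ ^ m j := by
        apply Finset.prod_le_prod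
        · intro j hj
          positivity
        · intro j hj
          exact pow_le_pow_left₀ (by positivity) (hfactor j hj) _
      have hsplit : ∏ j ∈ Finset.univ.erase i,
          ((1 - 1/(2*(n:ℝ))) * ‖z i - z j‖) ^ m j
          = (1 - 1/(2*(n:ℝ))) ^ (∑ j ∈ Finset.univ.erase i, m j) * PiA := by
        rw [hPiA_eq, ← Finset.prod_pow_eq_pow_sum, ← Finset.prod_mul_distrib]
        apply Finset.prod_congr rfl
        intro j hj
        rw [mul_pow]
      have : (1/2) * PiA ≤ (1 - 1/(2*(n:ℝ))) ^ (∑ j ∈ Finset.univ.erase i, m j) * PiA :=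
        mul_le_mul_of_nonneg_right hhalf hPiApos.le
      linarith [hsplit ▸ hstep]
    have hlowerP : ‖c‖ * (2:ℝ)^(-b/2) * PiA * (1/2)
        ≤ ‖p.eval x‖ := by
      rw [hevalp x, norm_mul, norm_prod]
      have hprodsplit : ∏ j : Fin k, ‖(x - z j) ^ m j‖
          = ‖x - z i‖ ^ m i
            * ∏ j ∈ Finset.univ.erase i, ‖x - z j‖ ^ m j := by
        rw [← Finset.mul_prod_erase Finset.univ _ (Finset.mem_univ i)]
        simp [norm_pow]
      rw [hprodsplit, hxd, hrm]
      calc ‖c‖ * (2:ℝ)^(-b/2) * PiA * (1/2)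
          = ‖c‖ * ((2:ℝ)^(-b/2) * ((1/2) * PiA)) := by ring
        _ ≤ ‖c‖ * ((2:ℝ)^(-b/2)
            * ∏ j ∈ Finset.univ.erase i, ‖x - z j‖ ^ m j) := by
            apply mul_le_mul_of_nonneg_left _ habsc.le
            apply mul_le_mul_of_nonneg_left hprod_lower (Real.rpow_pos_of_pos two_pos _).le
        _ = ‖c‖ * ((2:ℝ)^(-b/2)
            * ∏ j ∈ Finset.univ.erase i, ‖x - z j‖ ^ m j) := rfl
    -- upper bound for the perturbation
    have hmaxx : max 1 (‖x‖) ^ n ≤ v^n * (4/3) := by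
      have hxabs : ‖x‖ ≤ ‖z i‖ + r i := by
        have : x = z i + (x - z i) := by ring
        calc ‖x‖ = ‖z i + (x - z i)‖ := by rw [← this]
          _ ≤ ‖z i‖ + ‖x - z i‖ := norm_add_le _ _
          _ = ‖z i‖ + r i := by rw [hxd]
      have hmax1 : max 1 (‖x‖) ≤ v * (1 + r i) := by
        apply max_le
        · have h11 : (1:ℝ) * 1 ≤ v * (1 + r i) :=
            mul_le_mul hv1 (by linarith [hripos]) one_pos.le (by linarith [hv1])
          linarith
        · calc ‖x‖ ≤ ‖z i‖ + r i := hxabs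
            _ ≤ v + v * r i := by
                have h1' : ‖z i‖ ≤ v := le_max_right _ _
                have h2' : (1:ℝ) * r i ≤ v * r i :=
                  mul_le_mul_of_nonneg_right hv1 hripos.le
                linarith
            _ = v * (1 + r i) := by ring
      have hr14 : (n:ℝ) * r i ≤ 1/4 := by
        have h2n : r i ≤ 1 / (2 * (n:ℝ)^2) := (hr' i) ▸ h1 i
        have : (n:ℝ) * r i ≤ (n:ℝ) * (1 / (2 * (n:ℝ)^2)) :=
          mul_le_mul_of_nonneg_left h2n (by positivity)
        have heq2 : (n:ℝ) * (1 / (2 * (n:ℝ)^2)) = 1/(2*(n:ℝ)) := by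
          field_simp
        have h2n4 : 1/(2*(n:ℝ)) ≤ 1/4 := by
          apply div_le_div_of_nonneg_left one_pos.le (by norm_num) (by linarith)
        linarith [heq2 ▸ this]
      have hexp43 : Real.exp ((n:ℝ) * r i) ≤ 4/3 := by
        have he1 : Real.exp ((n:ℝ) * r i) ≤ Real.exp (1/4) :=
          Real.exp_le_exp.mpr hr14
        linarith [exp_quarter_le]
      have hpow : (1 + r i)^n ≤ 4/3 := by
        calc (1 + r i)^n ≤ (Real.exp (r i))^n := by
              apply pow_le_pow_left₀ (by positivity)
              linarith [Real.add_one_le_exp (r i)]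
          _ = Real.exp ((n:ℝ) * r i) := by
              rw [← Real.exp_nat_mul]
          _ ≤ 4/3 := hexp43
      calc max 1 (‖x‖) ^ n ≤ (v * (1 + r i))^n :=
            pow_le_pow_left₀ (le_trans zero_le_one (le_max_left _ _)) hmax1 _
        _ = v^n * (1 + r i)^n := mul_pow _ _ _
        _ ≤ v^n * (4/3) := mul_le_mul_of_nonneg_left hpow hvnpos.le
    have hupperD : ‖Polynomial.eval x (Polynomial.C (t:ℂ) * (ph - p))‖
        ≤ ‖c‖ * (2:ℝ)^(-b/2) * PiA * (1/12) := by
      rw [Polynomial.eval_mul, Polynomial.eval_C, norm_mul]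
      have hT : ‖(t:ℂ)‖ ≤ 1 := by
        rw [Complex.norm_real, Real.norm_eq_abs, _root_.abs_of_nonneg ht.1]
        exact ht.2
      have hdegd : (ph - p).natDegree ≤ n := by
        refine le_trans (Polynomial.natDegree_sub_le _ _) ?_
        rw [hdegph, hdegp]
        simp
      have heval_le : ‖Polynomial.eval x (ph - p)‖
          ≤ onenorm (ph - p) * max 1 (‖x‖) ^ n := abs_eval_le _ _ _ hdegd
      have honed : onenorm (ph - p) ≤ 2^(-b) * onenorm p := by
        rw [onenorm_sub_comm]
        exact hnorm
      have honep0 : 0 ≤ onenorm p := by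
        apply Finset.sum_nonneg
        intro j hj
        exact norm_nonneg _
      have hmaxx0 : (0:ℝ) ≤ max 1 (‖x‖) ^ n := by positivity
      have hchain : onenorm (ph - p) * max 1 (‖x‖) ^ n
          ≤ (2^(-b) * (((n:ℝ)+1) * 2^τ * ‖c‖)) * (v^n * (4/3)) := by
        apply mul_le_mul
        · refine le_trans honed ?_
          apply mul_le_mul_of_nonneg_left honep (Real.rpow_pos_of_pos two_pos _).le
        · exact hmaxx
        · exact hmaxx0
        · positivity
      have hbb : (2:ℝ)^(-b) = (2:ℝ)^(-b/2) * (2:ℝ)^(-b/2) := by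
        rw [← Real.rpow_add two_pos]
        congr 1
        ring
      have hfinal : (2^(-b) * (((n:ℝ)+1) * 2^τ * ‖c‖)) * (v^n * (4/3))
          ≤ ‖c‖ * (2:ℝ)^(-b/2) * PiA * (1/12) := by
        rw [hbb]
        have hre : (2:ℝ)^(-b/2) * (2:ℝ)^(-b/2) * (((n:ℝ)+1) * 2^τ * ‖c‖)
            * (v^n * (4/3))
            = (‖c‖ * (4/3) * (1/16)) * ((2:ℝ)^(-b/2)
              * ((2:ℝ)^(-b/2) * (16 * ((n:ℝ)+1) * 2^τ * v^n))) := by ring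
        rw [hre]
        have hstep2 : (2:ℝ)^(-b/2) * ((2:ℝ)^(-b/2) * (16 * ((n:ℝ)+1) * 2^τ * v^n))
            ≤ (2:ℝ)^(-b/2) * PiA :=
          mul_le_mul_of_nonneg_left hA (Real.rpow_pos_of_pos two_pos _).le
        calc (‖c‖ * (4/3) * (1/16)) * ((2:ℝ)^(-b/2)
              * ((2:ℝ)^(-b/2) * (16 * ((n:ℝ)+1) * 2^τ * v^n)))
            ≤ (‖c‖ * (4/3) * (1/16)) * ((2:ℝ)^(-b/2) * PiA) := by
              apply mul_le_mul_of_nonneg_left hstep2 (by positivity)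
          _ = ‖c‖ * (2:ℝ)^(-b/2) * PiA * (1/12) := by ring
      calc ‖(t:ℂ)‖ * ‖Polynomial.eval x (ph - p)‖
          ≤ 1 * (onenorm (ph - p) * max 1 (‖x‖) ^ n) := by
            apply mul_le_mul hT heval_le (norm_nonneg _) one_pos.le
        _ = onenorm (ph - p) * max 1 (‖x‖) ^ n := one_mul _
        _ ≤ (2^(-b) * (((n:ℝ)+1) * 2^τ * ‖c‖)) * (v^n * (4/3)) := hchain
        _ ≤ ‖c‖ * (2:ℝ)^(-b/2) * PiA * (1/12) := hfinal
    -- combine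
    have hadd : Polynomial.eval x (p + Polynomial.C (t:ℂ) * (ph - p))
        = Polynomial.eval x p + Polynomial.eval x (Polynomial.C (t:ℂ) * (ph - p)) := by
      rw [Polynomial.eval_add]
    rw [hadd]
    have htr : ‖Polynomial.eval x p‖
        ≤ ‖Polynomial.eval x p + Polynomial.eval x (Polynomial.C (t:ℂ) * (ph - p))‖
          + ‖Polynomial.eval x (Polynomial.C (t:ℂ) * (ph - p))‖ := by
      have h := norm_add_le
        (Polynomial.eval x p + Polynomial.eval x (Polynomial.C (t:ℂ) * (ph - p)))
        (-(Polynomial.eval x (Polynomial.C (t:ℂ) * (ph - p))))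
      simpa using h
    rw [hδ₀def]
    linarith [hlowerP, hupperD, htr]
  -- apply the homotopy counting lemma
  have hcount := homotopy_count p ph (z i) (r i) hripos δ₀ hδ₀pos hKI
  -- membership of the roots z j in the ball
  have hzball : ∀ j : Fin k, (z j ∈ ball (z i) (r i)) ↔ j = i := by
    intro j
    constructor
    · intro hj
      by_contra hne
      have hd : dist (z j) (z i) = ‖z i - z j‖ := by
        rw [Complex.dist_eq, norm_sub_rev]
      have hσr : σ i ≤ ‖z i - z j‖ := hσ1 i j hne
      have hlt : r i < σ i := by
        have h2n1 : σ i / (2*(n:ℝ)) < σ i :=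
          div_lt_self (hσpos i) (by linarith)
        linarith [hrσ i]
      have hjj := mem_ball.mp hj
      rw [hd] at hjj
      linarith
    · intro h
      subst h
      exact mem_ball_self hripos
  -- count of the roots of p in the ball
  have hcount0 : (p.roots.filter fun w => w ∈ ball (z i) (r i)).card = m i := by
    rw [hrootsp, my_filter_bind, Multiset.card_bind]
    have heach : ∀ j : Fin k,
        (Multiset.filter (fun w => w ∈ ball (z i) (r i)) (m j • ({z j} : Multiset ℂ))).card
          = if j = i then m j else 0 := by
      intro j
      rw [Multiset.nsmul_singleton]
      by_cases h : j = i
      · rw [if_pos h, Multiset.filter_eq_self.mpr, Multiset.card_replicate]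
        intro a ha
        rw [Multiset.eq_of_mem_replicate ha]
        exact (hzball j).mpr h
      · rw [if_neg h, Multiset.filter_eq_nil.mpr, Multiset.card_zero]
        intro a ha
        rw [Multiset.eq_of_mem_replicate ha]
        intro hmem
        exact h ((hzball j).mp hmem)
    have hmap : (Multiset.map (Multiset.card ∘ fun j =>
        Multiset.filter (fun w => w ∈ ball (z i) (r i)) (m j • ({z j} : Multiset ℂ)))
          Finset.univ.val)
        = Multiset.map (fun j : Fin k => if j = i then m j else 0) Finset.univ.val :=
      Multiset.map_congr rfl (fun j _ => heach j)
    rw [hmap]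
    have hsum' : (Finset.univ.val.map (fun j : Fin k => if j = i then m j else 0)).sum
        = ∑ j : Fin k, if j = i then m j else 0 := rfl
    rw [hsum', Finset.sum_ite_eq' Finset.univ i m]
    simp
  -- count of the roots of ph in the ball
  have hcount1 : (ph.roots.filter fun w => w ∈ ball (z i) (r i)).card
      = (Finset.univ.filter fun ℓ : Fin n => zh ℓ ∈ ball (z i) (r i)).card := by
    rw [hrootsph', ← Multiset.countP_eq_card_filter, Multiset.countP_map]
    rfl
  -- no approximate root on the sphere
  have hnosphere : ∀ ℓ : Fin n, zh ℓ ∉ sphere (z i) (r i) := by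
    intro ℓ hℓ
    have h0 : Polynomial.eval (zh ℓ) ph = 0 := by
      rw [hevalph]
      rw [Finset.prod_eq_zero (Finset.mem_univ ℓ) (by simp)]
      ring
    have hKI1 := hKI 1 (by norm_num) (zh ℓ) hℓ
    rw [show p + Polynomial.C ((1:ℝ):ℂ) * (ph - p) = ph by push_cast; rw [Polynomial.C_1]; ring] at hKI1
    rw [h0] at hKI1
    simp only [norm_zero] at hKI1
    linarith [hδ₀pos]
  have hfiltereq : (Finset.univ.filter fun ℓ : Fin n => zh ℓ ∈ closedBall (z i) (r i))
      = (Finset.univ.filter fun ℓ : Fin n => zh ℓ ∈ ball (z i) (r i)) := by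
    apply Finset.filter_congr
    intro ℓ _
    constructor
    · intro h
      rcases lt_or_eq_of_le (mem_closedBall.mp h) with h' | h'
      · exact mem_ball.mpr h'
      · exact absurd (mem_sphere.mpr h') (hnosphere ℓ)
    · exact fun h => ball_subset_closedBall h
  calc (Finset.univ.filter fun ℓ : Fin n => zh ℓ ∈ closedBall (z i) (r i)).card
      = (Finset.univ.filter fun ℓ : Fin n => zh ℓ ∈ ball (z i) (r i)).card := by
        rw [hfiltereq]
    _ = (ph.roots.filter fun w => w ∈ ball (z i) (r i)).card := hcount1.symm
    _ = (p.roots.filter fun w => w ∈ ball (z i) (r i)).card := hcount.symm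
    _ = m i := hcount0
end

section
/- Let n ≥ 2 be an integer, let z̃_1,…,z̃_k ∈ ℂ (k ≥ 2) be distinct points, let σ̃_ℓ := min_{j≠ℓ} |z̃_ℓ − z̃_j|, and let r_1,…,r_k be positive reals with r_ℓ ≤ σ̃_ℓ/(128 n²) for all ℓ. Fix indices i ≠ j, a point ẑ ∈ ℂ with |ẑ − z̃_j| ≤ r_j, and points x, y ∈ ℂ with |x − z̃_i| = |y − z̃_i| = n·r_i. Then (1 − 1/n)·|y − ẑ| ≤ |x − ẑ| ≤ (1 + 1/n)·|y − ẑ|. -/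
/-- From the proof of Lemma 9: for two points `x, y` on the boundary circle of
the disk of radius `n·r_i` around `z̃_i`, the distances to any point `ẑ` near
`z̃_j` agree up to a factor `1 ± 1/n`. -/
theorem stmt7 (n k : ℕ) (hn : 2 ≤ n) (hk : 2 ≤ k)
    (zt : Fin k → ℂ) (hzt : Function.Injective zt)
    (σt : Fin k → ℝ)
    (hσ1 : ∀ ℓ j, j ≠ ℓ → σt ℓ ≤ ‖zt ℓ - zt j‖)
    (hσ2 : ∀ ℓ, ∃ j, j ≠ ℓ ∧ σt ℓ = ‖zt ℓ - zt j‖)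
    (r : Fin k → ℝ) (hr : ∀ ℓ, 0 < r ℓ)
    (hrσ : ∀ ℓ, r ℓ ≤ σt ℓ / (128 * (n : ℝ) ^ 2))
    (i j : Fin k) (hij : i ≠ j)
    (zh : ℂ) (hzh : ‖zh - zt j‖ ≤ r j)
    (x y : ℂ)
    (hx : ‖x - zt i‖ = n * r i)
    (hy : ‖y - zt i‖ = n * r i) :
    (1 - 1 / (n : ℝ)) * ‖y - zh‖ ≤ ‖x - zh‖ ∧
      ‖x - zh‖ ≤ (1 + 1 / (n : ℝ)) * ‖y - zh‖ := by
  have hN : (2 : ℝ) ≤ (n : ℝ) := by exact_mod_cast hn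
  set N : ℝ := (n : ℝ) with hNdef
  set D : ℝ := ‖zt i - zt j‖ with hDdef
  have hD : 0 < D := by
    have : zt i - zt j ≠ 0 := sub_ne_zero.mpr (fun h => hij (hzt h))
    simpa [hDdef] using (norm_pos_iff.mpr this)
  have hposden : (0 : ℝ) < 128 * N ^ 2 := by positivity
  have hri : r i ≤ D / (128 * N ^ 2) := by
    refine le_trans (hrσ i) ?_
    have := hσ1 i j hij.symm
    gcongr
  have hrj : r j ≤ D / (128 * N ^ 2) := by
    refine le_trans (hrσ j) ?_
    have h1 := hσ1 j i hij
    have h2 : ‖zt j - zt i‖ = D := by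
      rw [hDdef, norm_sub_rev]
    rw [h2] at h1
    gcongr
  have hxy : ‖x - y‖ ≤ 2 * N * r i := by
    calc ‖x - y‖ ≤ ‖x - zt i‖ + ‖zt i - y‖ :=
          norm_sub_le_norm_sub_add_norm_sub x (zt i) y
      _ = N * r i + N * r i := by
          rw [hx, norm_sub_rev, hy]
      _ = 2 * N * r i := by ring
  have hyz : D - r j - N * r i ≤ ‖y - zh‖ := by
    have h1 : D ≤ ‖zt i - zh‖ + ‖zh - zt j‖ :=
      norm_sub_le_norm_sub_add_norm_sub (zt i) zh (zt j)
    have h2 : ‖zt i - zh‖ ≤ ‖zt i - y‖ + ‖y - zh‖ :=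
      norm_sub_le_norm_sub_add_norm_sub (zt i) y zh
    have h3 : ‖zt i - y‖ = N * r i := by
      rw [norm_sub_rev, hy]
    linarith
  have key : ‖x - y‖ ≤ (1 / N) * ‖y - zh‖ := by
    rw [div_mul_eq_mul_div, one_mul, le_div_iff₀ (by linarith : (0:ℝ) < N)]
    have hriN : N * (N * r i) ≤ N * (N * (D / (128 * N ^ 2))) := by
      have := hr i
      gcongr
    have hsimp : N * (N * (D / (128 * N ^ 2))) = D / 128 := by
      field_simp
    rw [hsimp] at hriN
    have hxyN : ‖x - y‖ * N ≤ 2 * (N * (N * r i)) := by nlinarith [hxy, hN]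
    have hrj' : r j ≤ D / 512 := by
      refine hrj.trans ?_
      apply div_le_div_of_nonneg_left hD.le (by norm_num)
      nlinarith [hN]
    have hNri : N * r i ≤ D / 256 := by nlinarith [hriN, hN, hr i]
    linarith
  have t1 : ‖x - zh‖ ≤ ‖x - y‖ + ‖y - zh‖ :=
    norm_sub_le_norm_sub_add_norm_sub x y zh
  have t2 : ‖y - zh‖ ≤ ‖y - x‖ + ‖x - zh‖ :=
    norm_sub_le_norm_sub_add_norm_sub y x zh
  have t3 : ‖y - x‖ = ‖x - y‖ := norm_sub_rev _ _
  constructor <;> nlinarith [key, t1, t2, t3]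
end

section
/- Let G ∈ ℤ[X] be a nonzero polynomial of degree N ≥ 1 all of whose coefficients have absolute value at most 2^μ, where μ ≥ 0 is a real number. If g ∈ ℤ[X] divides G (i.e., G = g·h for some h ∈ ℤ[X]), then every coefficient of g has absolute value at most N·2^{N+μ+1}. -/
set_option maxHeartbeats 1000000

open Polynomial Finset Complex

noncomputable def Complex.abs : AbsoluteValue ℂ ℝ := NormedField.toAbsoluteValue ℂ

lemma Complex.abs_apply (z : ℂ) : Complex.abs z = ‖z‖ := rfl

lemma Complex.abs_conj (z : ℂ) : Complex.abs ((starRingEnd ℂ) z) = Complex.abs z := by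
  simp [Complex.abs_apply]

lemma Complex.abs_intCast (n : ℤ) : Complex.abs (n : ℂ) = |(n : ℝ)| := by
  rw [Complex.abs_apply, Complex.norm_intCast]

lemma Complex.sq_abs (z : ℂ) : Complex.abs z ^ 2 = Complex.normSq z := by
  rw [Complex.abs_apply, Complex.sq_norm]

/-! ### L² norm of the coefficient sequence -/

noncomputable def stmt11L2 (p : ℂ[X]) : ℝ :=
  ∑ k ∈ Finset.range (p.natDegree + 1), Complex.normSq (p.coeff k)

lemma stmt11L2_eq (p : ℂ[X]) {n : ℕ} (hn : p.natDegree + 1 ≤ n) :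
    stmt11L2 p = ∑ k ∈ Finset.range n, Complex.normSq (p.coeff k) := by
  unfold stmt11L2
  refine Finset.sum_subset (Finset.range_subset_range.2 hn) (fun k _ hk => ?_)
  rw [p.coeff_eq_zero_of_natDegree_lt (by simp at hk; omega)]
  simp

lemma stmt11L2_nonneg (p : ℂ[X]) : 0 ≤ stmt11L2 p :=
  Finset.sum_nonneg fun _ _ => Complex.normSq_nonneg _

lemma stmt11_sum_normSq_X_mul (R : ℂ[X]) (n : ℕ) (hn : R.natDegree + 1 ≤ n) :
    ∑ k ∈ Finset.range (n+1), Complex.normSq ((X * R).coeff k)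
      = ∑ k ∈ Finset.range (n+1), Complex.normSq (R.coeff k) := by
  rw [Finset.sum_range_succ', Finset.sum_range_succ]
  simp only [coeff_X_mul, mul_coeff_zero, coeff_X_zero, zero_mul, map_zero]
  rw [R.coeff_eq_zero_of_natDegree_lt (by omega)]
  simp

lemma stmt11_normSq_key (a b α : ℂ) :
    Complex.normSq (a - α*b) + Complex.normSq b + Complex.normSq α * Complex.normSq a
      = Complex.normSq ((starRingEnd ℂ) α * a - b) + Complex.normSq a
        + Complex.normSq α * Complex.normSq b := by
  simp only [Complex.normSq_apply, Complex.sub_re, Complex.sub_im, Complex.mul_re,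
    Complex.mul_im, Complex.conj_re, Complex.conj_im]
  ring

/-- Swapping a root `α` for the reflected linear factor `conj α · X - 1`
preserves the L² norm of the coefficients. -/
lemma stmt11L2_swap (α : ℂ) (R : ℂ[X]) :
    stmt11L2 ((X - C α) * R) = stmt11L2 ((C ((starRingEnd ℂ) α) * X - 1) * R) := by
  set n := R.natDegree + 1 with hn
  have hd1 : ((X - C α) * R).natDegree + 1 ≤ n + 1 := by
    have := natDegree_mul_le (p := X - C α) (q := R)
    have h2 : (X - C α).natDegree ≤ 1 := by
      refine le_trans (natDegree_sub_le _ _) ?_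
      simp [natDegree_X_le]
    omega
  have hd2 : ((C ((starRingEnd ℂ) α) * X - 1) * R).natDegree + 1 ≤ n + 1 := by
    have := natDegree_mul_le (p := C ((starRingEnd ℂ) α) * X - 1) (q := R)
    have h2 : (C ((starRingEnd ℂ) α) * X - 1).natDegree ≤ 1 := by
      refine le_trans (natDegree_sub_le _ _) ?_
      simp [natDegree_C_mul_le]
      exact le_trans (natDegree_C_mul_le _ _) natDegree_X_le
    omega
  rw [stmt11L2_eq _ hd1, stmt11L2_eq _ hd2]
  have e1 : ∀ k, ((X - C α) * R).coeff k = (X*R).coeff k - α * R.coeff k := by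
    intro k; rw [sub_mul]; simp [coeff_sub, coeff_C_mul]
  have e2 : ∀ k, ((C ((starRingEnd ℂ) α) * X - 1) * R).coeff k
      = (starRingEnd ℂ) α * (X*R).coeff k - R.coeff k := by
    intro k; rw [sub_mul, mul_assoc]; simp [coeff_sub, coeff_C_mul]
  simp only [e1, e2]
  have hshift := stmt11_sum_normSq_X_mul R n (by omega)
  have hsum := Finset.sum_congr rfl (fun k (_ : k ∈ Finset.range (n+1)) =>
    stmt11_normSq_key ((X*R).coeff k) (R.coeff k) α)
  rw [Finset.sum_add_distrib, Finset.sum_add_distrib, Finset.sum_add_distrib,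
    Finset.sum_add_distrib, ← Finset.mul_sum, ← Finset.mul_sum] at hsum
  rw [hshift] at hsum
  linarith

/-! ### Landau's inequality: (Mahler measure)² ≤ L² norm -/

lemma stmt11_mea_sq_le_L2 : ∀ (n : ℕ) (s : Multiset ℂ) (a : ℂ),
    (Multiset.filter (fun α => 1 < Complex.abs α) s).card = n →
    (Complex.abs a * (s.map (fun α => max 1 (Complex.abs α))).prod)^2
      ≤ stmt11L2 (C a * (s.map (fun α => X - C α)).prod) := by
  intro n
  induction n with
  | zero =>
    intro s a hcard
    rcases eq_or_ne a 0 with rfl | ha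
    · simpa using stmt11L2_nonneg _
    have hall : ∀ α ∈ s, Complex.abs α ≤ 1 := by
      intro α hα
      by_contra hgt
      have : α ∈ Multiset.filter (fun α => 1 < Complex.abs α) s :=
        Multiset.mem_filter.2 ⟨hα, not_le.1 hgt⟩
      have := Multiset.card_pos_iff_exists_mem.2 ⟨α, this⟩
      omega
    have hprod : (s.map (fun α => max 1 (Complex.abs α))).prod = 1 := by
      refine Multiset.prod_eq_one (fun x hx => ?_)
      obtain ⟨α, hα, rfl⟩ := Multiset.mem_map.1 hx
      exact max_eq_left (hall α hα)
    rw [hprod, mul_one]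
    set p := C a * (s.map (fun α => X - C α)).prod with hp
    have hmon : ((s.map (fun α => X - C α)).prod).Monic :=
      monic_multiset_prod_of_monic _ _ (fun α _ => monic_X_sub_C α)
    have hdeg : p.natDegree = Multiset.card s := by
      rw [hp, natDegree_C_mul ha, natDegree_multiset_prod_X_sub_C_eq_card]
    have hlead : p.coeff p.natDegree = a := by
      rw [hdeg, hp, coeff_C_mul]
      have : ((s.map (fun α => X - C α)).prod).coeff (Multiset.card s) = 1 := by
        have := hmon.leadingCoeff
        rwa [leadingCoeff, natDegree_multiset_prod_X_sub_C_eq_card] at this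
      rw [this, mul_one]
    have hmem : p.natDegree ∈ Finset.range (p.natDegree + 1) := by simp
    have := Finset.single_le_sum (f := fun k => Complex.normSq (p.coeff k))
      (fun k _ => Complex.normSq_nonneg _) hmem
    have this2 : Complex.normSq a ≤ stmt11L2 p := by
      unfold stmt11L2; simpa only [hlead] using this
    rw [← Complex.sq_abs] at this2
    exact this2
  | succ n ih =>
    intro s a hcard
    have hex : ∃ α ∈ s, 1 < Complex.abs α := by
      by_contra hno
      push_neg at hno
      have : Multiset.filter (fun α => 1 < Complex.abs α) s = 0 := by
        rw [Multiset.filter_eq_nil]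
        intro α hα
        exact not_lt.2 (hno α hα)
      rw [this] at hcard; simp at hcard
    obtain ⟨α, hαs, hα⟩ := hex
    set t := s.erase α with ht
    have hst : s = α ::ₘ t := (Multiset.cons_erase hαs).symm
    have hα0 : α ≠ 0 := by
      intro h; rw [h] at hα; simp at hα; linarith
    set β := ((starRingEnd ℂ) α)⁻¹ with hβ
    have hβabs : Complex.abs β = (Complex.abs α)⁻¹ := by
      rw [hβ, map_inv₀, Complex.abs_conj]
    have hβle : Complex.abs β ≤ 1 := by
      rw [hβabs]
      exact inv_le_one_of_one_le₀ hα.le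
    have key : C a * (s.map (fun α => X - C α)).prod
        = (X - C α) * (C a * (t.map (fun α => X - C α)).prod) := by
      rw [hst, Multiset.map_cons, Multiset.prod_cons]; ring
    have key2 : (C ((starRingEnd ℂ) α) * X - 1) * (C a * (t.map (fun γ => X - C γ)).prod)
        = C (a * (starRingEnd ℂ) α) * ((β ::ₘ t).map (fun γ => X - C γ)).prod := by
      have h1 : C ((starRingEnd ℂ) α) * X - 1 = C ((starRingEnd ℂ) α) * (X - C β) := by
        rw [mul_sub, ← C_mul, mul_inv_cancel₀ (by simpa using hα0), C_1]
      rw [h1, Multiset.map_cons, Multiset.prod_cons, C_mul]; ring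
    rw [key, stmt11L2_swap, key2]
    have hfilt : (Multiset.filter (fun γ => 1 < Complex.abs γ) (β ::ₘ t)).card = n := by
      rw [Multiset.filter_cons_of_neg _ (by simpa using not_lt.2 hβle)]
      have : (Multiset.filter (fun γ => 1 < Complex.abs γ) s).card
          = (Multiset.filter (fun γ => 1 < Complex.abs γ) t).card + 1 := by
        rw [hst, Multiset.filter_cons_of_pos _ (by simpa using hα)]
        simp
      omega
    have := ih (β ::ₘ t) (a * (starRingEnd ℂ) α) hfilt
    refine le_trans (le_of_eq ?_) this
    congr 1
    rw [map_mul, Complex.abs_conj, Multiset.map_cons, Multiset.prod_cons,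
      max_eq_left hβle, hst, Multiset.map_cons, Multiset.prod_cons,
      max_eq_right hα.le]
    ring

/-! ### Multiset product auxiliary lemmas -/

lemma stmt11_msprod_one_le {s : Multiset ℂ} {f : ℂ → ℝ} (hf : ∀ x ∈ s, 1 ≤ f x) :
    1 ≤ (s.map f).prod := by
  induction s using Multiset.induction with
  | empty => simp
  | cons a t ih =>
    rw [Multiset.map_cons, Multiset.prod_cons]
    have h1 := hf a (Multiset.mem_cons_self a t)
    have h2 := ih (fun x hx => hf x (Multiset.mem_cons_of_mem hx))
    nlinarith

lemma stmt11_msprod_le {s : Multiset ℂ} {f g : ℂ → ℝ} (h0 : ∀ x ∈ s, 0 ≤ f x)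
    (hfg : ∀ x ∈ s, f x ≤ g x) : (s.map f).prod ≤ (s.map g).prod := by
  induction s using Multiset.induction with
  | empty => simp
  | cons a t ih =>
    rw [Multiset.map_cons, Multiset.prod_cons, Multiset.map_cons, Multiset.prod_cons]
    have h1 := h0 a (Multiset.mem_cons_self a t)
    have h2 := hfg a (Multiset.mem_cons_self a t)
    have h3 := ih (fun x hx => h0 x (Multiset.mem_cons_of_mem hx))
      (fun x hx => hfg x (Multiset.mem_cons_of_mem hx))
    have h4 : (0:ℝ) ≤ (t.map f).prod := by
      refine Multiset.prod_nonneg ?_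
      intro x hx
      obtain ⟨y, hy, rfl⟩ := Multiset.mem_map.1 hx
      exact h0 y (Multiset.mem_cons_of_mem hy)
    nlinarith

/-- Coefficients of a monic product of linear factors are bounded by `∏ (1 + |α|)`. -/
lemma stmt11_coeff_prod_bound : ∀ (s : Multiset ℂ) (i : ℕ),
    Complex.abs (((s.map (fun α => X - C α)).prod).coeff i)
      ≤ (s.map (fun α => 1 + Complex.abs α)).prod := by
  intro s
  induction s using Multiset.induction with
  | empty =>
    intro i
    simp only [Multiset.map_zero, Multiset.prod_zero, coeff_one]
    split_ifs <;> simp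
  | cons α t ih =>
    intro i
    rw [Multiset.map_cons, Multiset.prod_cons, Multiset.map_cons, Multiset.prod_cons]
    set q := (t.map (fun α => X - C α)).prod with hq
    set B := (t.map (fun α => 1 + Complex.abs α)).prod with hB
    have hB1 : 1 ≤ B :=
      stmt11_msprod_one_le (fun x _ => le_add_of_nonneg_right (AbsoluteValue.nonneg _ _))
    have hXq : ∀ j, Complex.abs ((X * q).coeff j) ≤ B := by
      intro j
      cases j with
      | zero => simpa using zero_le_one.trans hB1
      | succ j' => rw [coeff_X_mul]; exact ih j'
    have hc : ((X - C α) * q).coeff i = (X*q).coeff i - α * q.coeff i := by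
      rw [sub_mul]; simp [coeff_sub, coeff_C_mul]
    rw [hc]
    have h5 := AbsoluteValue.sub_le_add Complex.abs ((X*q).coeff i) (α * q.coeff i)
    have h6 : Complex.abs (α * q.coeff i) ≤ Complex.abs α * B := by
      rw [map_mul]
      exact mul_le_mul_of_nonneg_left (ih i) (AbsoluteValue.nonneg _ _)
    have h8 : (1 + Complex.abs α) * B = B + Complex.abs α * B := by ring
    rw [h8]
    exact le_trans h5 (add_le_add (hXq i) h6)

/-! ### The Mahler measure -/

noncomputable def stmt11Mea (p : ℂ[X]) : ℝ :=
  Complex.abs p.leadingCoeff * (p.roots.map (fun α => max 1 (Complex.abs α))).prod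

lemma stmt11Mea_nonneg (p : ℂ[X]) : 0 ≤ stmt11Mea p := by
  unfold stmt11Mea
  refine mul_nonneg (AbsoluteValue.nonneg _ _) (Multiset.prod_nonneg ?_)
  intro x hx
  obtain ⟨y, hy, rfl⟩ := Multiset.mem_map.1 hx
  positivity

lemma stmt11Mea_sq_le_L2 (p : ℂ[X]) : (stmt11Mea p)^2 ≤ stmt11L2 p := by
  have hfac := (IsAlgClosed.splits p).eq_prod_roots
  have h := stmt11_mea_sq_le_L2
    (Multiset.card (p.roots.filter (fun α => 1 < Complex.abs α))) p.roots p.leadingCoeff rfl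
  rw [← hfac] at h
  exact h
/-- Univariate case of Lemma 13: coefficients of an integer divisor of an
integer polynomial of degree `N` and coefficient bound `2^μ` are bounded by
`N·2^{N+μ+1}`. -/
theorem stmt11 (G g h : Polynomial ℤ) (hG : G ≠ 0) (N : ℕ) (hN : 1 ≤ N)
    (hdeg : G.natDegree = N) (μ : ℝ) (hμ : 0 ≤ μ)
    (hcoef : ∀ i, (|G.coeff i| : ℝ) ≤ 2 ^ μ)
    (hdvd : G = g * h) :
    ∀ i, (|g.coeff i| : ℝ) ≤ N * 2 ^ ((N : ℝ) + μ + 1) := by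
  intro i
  have hg0 : g ≠ 0 := fun hg => hG (by rw [hdvd, hg, zero_mul])
  have hh0 : h ≠ 0 := fun hh => hG (by rw [hdvd, hh, mul_zero])
  have hinj : Function.Injective (Int.castRingHom ℂ) := fun a b hab => by
    have : ((a:ℂ)) = ((b:ℂ)) := hab
    exact_mod_cast this
  set Gℂ := G.map (Int.castRingHom ℂ) with hGc
  set gℂ := g.map (Int.castRingHom ℂ) with hgc
  set hℂ := h.map (Int.castRingHom ℂ) with hhc
  have hGc0 : Gℂ ≠ 0 := (Polynomial.map_ne_zero_iff hinj).2 hG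
  have hgc0 : gℂ ≠ 0 := (Polynomial.map_ne_zero_iff hinj).2 hg0
  have hhc0 : hℂ ≠ 0 := (Polynomial.map_ne_zero_iff hinj).2 hh0
  have hmul : Gℂ = gℂ * hℂ := by rw [hGc, hgc, hhc, hdvd, Polynomial.map_mul]
  have hdegG : Gℂ.natDegree = N := by
    rw [hGc, natDegree_map_eq_of_injective hinj, hdeg]
  have hdegg : gℂ.natDegree ≤ N := by
    rw [hgc, natDegree_map_eq_of_injective hinj]
    exact hdeg ▸ natDegree_le_of_dvd ⟨h, hdvd⟩ hG
  have h2μ : (0:ℝ) < 2 ^ μ := Real.rpow_pos_of_pos two_pos μ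
  -- Step 1: L2 bound on Gℂ
  have hL2 : stmt11L2 Gℂ ≤ (N + 1) * (2 ^ μ)^2 := by
    unfold stmt11L2
    have hbd : ∀ k ∈ Finset.range (Gℂ.natDegree + 1),
        Complex.normSq (Gℂ.coeff k) ≤ (2 ^ μ)^2 := by
      intro k _
      have hck : Gℂ.coeff k = ((G.coeff k : ℤ) : ℂ) := by
        rw [hGc, Polynomial.coeff_map]; rfl
      rw [← Complex.sq_abs, hck, Complex.abs_intCast]
      have h1 : |((G.coeff k : ℤ) : ℝ)| = ((|G.coeff k| : ℤ) : ℝ) := by push_cast; simp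
      rw [h1]
      have := hcoef k
      have h0 : (0:ℝ) ≤ ((|G.coeff k| : ℤ) : ℝ) := by positivity
      nlinarith
    calc ∑ k ∈ Finset.range (Gℂ.natDegree + 1), Complex.normSq (Gℂ.coeff k)
        ≤ ∑ _k ∈ Finset.range (Gℂ.natDegree + 1), (2 ^ μ)^2 :=
          Finset.sum_le_sum hbd
      _ = (Gℂ.natDegree + 1) * (2 ^ μ)^2 := by
          rw [Finset.sum_const, Finset.card_range]; push_cast; ring
      _ = (N + 1) * (2 ^ μ)^2 := by rw [hdegG]
  -- Step 2: Mahler measure of Gℂ bounded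
  have hMeaG : stmt11Mea Gℂ ≤ 2 * N * 2 ^ μ := by
    have h1 := stmt11Mea_sq_le_L2 Gℂ
    have h2 : (stmt11Mea Gℂ)^2 ≤ (2 * N * 2 ^ μ)^2 := by
      refine le_trans (h1.trans hL2) ?_
      have : ((N:ℝ) + 1) ≤ (2*N)^2 := by
        have : (1:ℝ) ≤ N := by exact_mod_cast hN
        nlinarith
      nlinarith
    nlinarith [stmt11Mea_nonneg Gℂ, mul_nonneg (mul_nonneg (by norm_num : (0:ℝ) ≤ 2)
      (Nat.cast_nonneg N)) h2μ.le]
  -- Step 3: Mea gℂ ≤ Mea Gℂ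
  have hMea_le : stmt11Mea gℂ ≤ stmt11Mea Gℂ := by
    have hroots : Gℂ.roots = gℂ.roots + hℂ.roots := by
      rw [hmul, Polynomial.roots_mul (by rw [← hmul]; exact hGc0)]
    have hlc : Gℂ.leadingCoeff = gℂ.leadingCoeff * hℂ.leadingCoeff := by
      rw [hmul, leadingCoeff_mul]
    unfold stmt11Mea
    rw [hroots, hlc, Multiset.map_add, Multiset.prod_add, map_mul]
    have hlch : 1 ≤ Complex.abs hℂ.leadingCoeff := by
      have : hℂ.leadingCoeff = ((h.leadingCoeff : ℤ) : ℂ) := by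
        rw [hhc, leadingCoeff_map_of_injective hinj]; rfl
      rw [this, Complex.abs_intCast]
      have : h.leadingCoeff ≠ 0 := leadingCoeff_ne_zero.2 hh0
      have := Int.one_le_abs this
      exact_mod_cast this
    have hph : 1 ≤ (hℂ.roots.map (fun α => max 1 (Complex.abs α))).prod :=
      stmt11_msprod_one_le (fun x _ => le_max_left _ _)
    have hpg : 0 ≤ (gℂ.roots.map (fun α => max 1 (Complex.abs α))).prod := by
      refine Multiset.prod_nonneg ?_
      intro x hx
      obtain ⟨y, hy, rfl⟩ := Multiset.mem_map.1 hx
      positivity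
    have hag : 0 ≤ Complex.abs gℂ.leadingCoeff := AbsoluteValue.nonneg _ _
    have h9 : 1 ≤ Complex.abs hℂ.leadingCoeff
        * (hℂ.roots.map (fun α => max 1 (Complex.abs α))).prod := by nlinarith
    calc Complex.abs gℂ.leadingCoeff * (gℂ.roots.map (fun α => max 1 (Complex.abs α))).prod
        = Complex.abs gℂ.leadingCoeff
          * (gℂ.roots.map (fun α => max 1 (Complex.abs α))).prod * 1 := by ring
      _ ≤ Complex.abs gℂ.leadingCoeff * (gℂ.roots.map (fun α => max 1 (Complex.abs α))).prod
          * (Complex.abs hℂ.leadingCoeff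
            * (hℂ.roots.map (fun α => max 1 (Complex.abs α))).prod) :=
        mul_le_mul_of_nonneg_left h9 (mul_nonneg hag hpg)
      _ = Complex.abs gℂ.leadingCoeff * Complex.abs hℂ.leadingCoeff
          * ((gℂ.roots.map (fun α => max 1 (Complex.abs α))).prod
            * (hℂ.roots.map (fun α => max 1 (Complex.abs α))).prod) := by ring
  -- Step 4: coefficient bound of gℂ in terms of its Mahler measure
  have hcoeffg : Complex.abs (gℂ.coeff i) ≤ 2^N * stmt11Mea gℂ := by
    have hfac := (IsAlgClosed.splits gℂ).eq_prod_roots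
    have h1 : Complex.abs (gℂ.coeff i)
        ≤ Complex.abs gℂ.leadingCoeff
          * (gℂ.roots.map (fun α => 1 + Complex.abs α)).prod := by
      conv_lhs => rw [hfac]
      rw [coeff_C_mul, map_mul]
      exact mul_le_mul_of_nonneg_left (stmt11_coeff_prod_bound _ i)
        (AbsoluteValue.nonneg _ _)
    have h2 : (gℂ.roots.map (fun α => 1 + Complex.abs α)).prod
        ≤ 2^N * (gℂ.roots.map (fun α => max 1 (Complex.abs α))).prod := by
      have h3 : (gℂ.roots.map (fun α => 1 + Complex.abs α)).prod
          ≤ (gℂ.roots.map (fun α => 2 * max 1 (Complex.abs α))).prod := by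
        refine stmt11_msprod_le (fun x _ => by positivity) (fun x _ => ?_)
        rcases le_or_gt (Complex.abs x) 1 with hc | hc
        · rw [max_eq_left hc]; linarith
        · rw [max_eq_right hc.le]; linarith
      have h4 : (gℂ.roots.map (fun α => 2 * max 1 (Complex.abs α))).prod
          = 2 ^ (Multiset.card gℂ.roots)
            * (gℂ.roots.map (fun α => max 1 (Complex.abs α))).prod := by
        rw [show (fun α : ℂ => 2 * max 1 (Complex.abs α))
            = (fun α : ℂ => (fun _ => (2:ℝ)) α * (fun α => max 1 (Complex.abs α)) α) from rfl,
          Multiset.prod_map_mul, Multiset.map_const', Multiset.prod_replicate]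
      have h5 : (2:ℝ) ^ (Multiset.card gℂ.roots) ≤ 2^N := by
        refine pow_le_pow_right₀ one_le_two ?_
        exact le_trans (Polynomial.card_roots' gℂ) hdegg
      have hpg : 0 ≤ (gℂ.roots.map (fun α => max 1 (Complex.abs α))).prod := by
        refine Multiset.prod_nonneg ?_
        intro x hx
        obtain ⟨y, hy, rfl⟩ := Multiset.mem_map.1 hx
        positivity
      calc (gℂ.roots.map (fun α => 1 + Complex.abs α)).prod
          ≤ _ := h3
        _ = _ := h4
        _ ≤ 2^N * (gℂ.roots.map (fun α => max 1 (Complex.abs α))).prod := by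
            exact mul_le_mul_of_nonneg_right h5 hpg
    calc Complex.abs (gℂ.coeff i) ≤ _ := h1
      _ ≤ Complex.abs gℂ.leadingCoeff
          * (2^N * (gℂ.roots.map (fun α => max 1 (Complex.abs α))).prod) :=
        mul_le_mul_of_nonneg_left h2 (AbsoluteValue.nonneg _ _)
      _ = 2^N * stmt11Mea gℂ := by unfold stmt11Mea; ring
  -- Final assembly
  have hgi : (|g.coeff i| : ℝ) = Complex.abs (gℂ.coeff i) := by
    have : gℂ.coeff i = ((g.coeff i : ℤ) : ℂ) := by
      rw [hgc, Polynomial.coeff_map]; rfl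
    rw [this, Complex.abs_intCast]
  rw [hgi]
  have hfinal : Complex.abs (gℂ.coeff i) ≤ 2^N * (2 * N * 2 ^ μ) := by
    refine le_trans hcoeffg ?_
    have h2N : (0:ℝ) ≤ 2^N := by positivity
    exact mul_le_mul_of_nonneg_left (le_trans hMea_le hMeaG) h2N
  refine le_trans hfinal (le_of_eq ?_)
  rw [show (N:ℝ) + μ + 1 = (N:ℝ) + (μ + 1) from by ring,
    Real.rpow_add two_pos, Real.rpow_add two_pos, Real.rpow_natCast, Real.rpow_one]
  ring
end

section
/- Let p = p_n·∏_{i=1}^k (X − z_i)^{m_i} ∈ ℂ[X] be of degree n ≥ 2 with p_n ≠ 0 and k ≥ 2 distinct roots, and let σ_i := min_{j≠i}|z_i − z_j| and P_i := ∏_{j≠i}(z_i − z_j)^{m_j}. Let z̃_1,…,z̃_k ∈ ℂ satisfy |z̃_i − z_i| < σ_i/(64 n) for all i, let ẑ_1,…,ẑ_n ∈ ℂ, and let ι : {1,…,n} → {1,…,k} be an assignment such that exactly m_j indices ℓ satisfy ι(ℓ) = j, and |ẑ_ℓ − z_{ι(ℓ)}| < σ_{ι(ℓ)}/(64 n) for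 all ℓ. For each i define P̂_i := ∏_{ℓ : ι(ℓ) ≠ i} (z̃_i − ẑ_ℓ). Then |P_i|/2 < |P̂_i| < 2·|P_i| for every i ∈ {1,…,k}. -/
open Finset in
lemma aux13 {α : Type*} (n : ℕ) (hn : 2 ≤ n) (S : Finset α) (hS : S.card ≤ n)
    (a b : α → ℂ)
    (h : ∀ ℓ ∈ S, ‖b ℓ - a ℓ‖ < ‖a ℓ‖ / (32 * n)) :
    ‖∏ ℓ ∈ S, a ℓ‖ / 2 < ‖∏ ℓ ∈ S, b ℓ‖ ∧
      ‖∏ ℓ ∈ S, b ℓ‖ < 2 * ‖∏ ℓ ∈ S, a ℓ‖ := by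
  have hn0 : (0:ℝ) < n := by positivity
  set ε : ℝ := 1 / (32 * n) with hεdef
  have hε0 : 0 < ε := by positivity
  have hεn : ε * n = 1 / 32 := by rw [hεdef]; field_simp
  have hε1 : ε ≤ 1 / 64 := by
    rw [hεdef]
    rw [div_le_div_iff₀ (by positivity) (by norm_num)]
    have : (2:ℝ) ≤ n := by exact_mod_cast hn
    linarith
  have han : ∀ ℓ ∈ S, 0 < ‖a ℓ‖ := by
    intro ℓ hℓ
    by_contra hcon
    push_neg at hcon
    have h0 : ‖a ℓ‖ = 0 := le_antisymm hcon (norm_nonneg _)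
    have h1 := h ℓ hℓ
    rw [h0] at h1
    simp at h1
    exact absurd h1 (not_lt.mpr (norm_nonneg _))
  have hub : ∏ ℓ ∈ S, ‖b ℓ‖ ≤ (1 + ε) ^ S.card * ∏ ℓ ∈ S, ‖a ℓ‖ := by
    rw [← Finset.prod_const, ← Finset.prod_mul_distrib]
    refine Finset.prod_le_prod (fun ℓ _ => norm_nonneg _) (fun ℓ hℓ => ?_)
    have h1 := h ℓ hℓ
    have h2 : ‖b ℓ‖ ≤ ‖a ℓ‖ + ‖b ℓ - a ℓ‖ := by
      calc ‖b ℓ‖ = ‖a ℓ + (b ℓ - a ℓ)‖ := by congr 1; ring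
      _ ≤ _ := norm_add_le _ _
    have h3 : ‖a ℓ‖ / (32 * n) = ε * ‖a ℓ‖ := by
      rw [hεdef]; ring
    nlinarith [han ℓ hℓ]
  have hlb : (1 - ε) ^ S.card * ∏ ℓ ∈ S, ‖a ℓ‖ ≤ ∏ ℓ ∈ S, ‖b ℓ‖ := by
    rw [← Finset.prod_const, ← Finset.prod_mul_distrib]
    refine Finset.prod_le_prod (fun ℓ hℓ => by nlinarith [han ℓ hℓ]) (fun ℓ hℓ => ?_)
    have h1 := h ℓ hℓ
    have h2 : ‖a ℓ‖ ≤ ‖b ℓ‖ + ‖b ℓ - a ℓ‖ := by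
      calc ‖a ℓ‖ = ‖b ℓ - (b ℓ - a ℓ)‖ := by congr 1; ring
      _ ≤ _ := by
        rw [sub_eq_add_neg]
        calc ‖b ℓ + -(b ℓ - a ℓ)‖ ≤ ‖b ℓ‖ + ‖-(b ℓ - a ℓ)‖ :=
          norm_add_le _ _
        _ = _ := by rw [norm_neg]
    have h3 : ‖a ℓ‖ / (32 * n) = ε * ‖a ℓ‖ := by
      rw [hεdef]; ring
    nlinarith [han ℓ hℓ]
  have hpow1 : (1 + ε) ^ S.card < 2 := by
    calc (1 + ε) ^ S.card ≤ Real.exp ε ^ S.card :=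
          pow_le_pow_left₀ (by positivity) (by linarith [Real.add_one_le_exp ε]) _
      _ = Real.exp (S.card * ε) := by rw [← Real.exp_nat_mul]
      _ ≤ Real.exp (n * ε) := by
          apply Real.exp_le_exp.mpr
          have : (S.card : ℝ) ≤ n := by exact_mod_cast hS
          nlinarith
      _ = Real.exp (1 / 32) := by rw [mul_comm, hεn]
      _ < Real.exp (Real.log 2) := Real.exp_lt_exp.mpr (by linarith [Real.log_two_gt_d9])
      _ = 2 := Real.exp_log (by norm_num)
  have hpow2 : (1:ℝ) / 2 < (1 - ε) ^ S.card := by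
    have h1 : (1:ℝ) - 1 / 32 ≤ (1 - ε) ^ n := by
      have := one_add_mul_le_pow (a := -ε) (by linarith) n
      have heq : (1 + -ε) = 1 - ε := by ring
      rw [heq] at this
      nlinarith
    have h2 : (1 - ε) ^ n ≤ (1 - ε) ^ S.card :=
      pow_le_pow_of_le_one (by linarith) (by linarith) hS
    linarith
  have hApos : 0 < ∏ ℓ ∈ S, ‖a ℓ‖ := Finset.prod_pos han
  rw [norm_prod, norm_prod]
  constructor
  · nlinarith
  · nlinarith

/-- From the proof of Theorem 10: the products `P̂_i` over approximations not
assigned to the root `z_i` are 2-approximations of `P_i`. -/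
theorem stmt13 (n k : ℕ) (hn : 2 ≤ n) (hk : 2 ≤ k)
    (c : ℂ) (hc : c ≠ 0)
    (z : Fin k → ℂ) (hz : Function.Injective z)
    (m : Fin k → ℕ) (hm : ∀ j, 1 ≤ m j) (hsum : ∑ j, m j = n)
    (p : Polynomial ℂ)
    (hp : p = Polynomial.C c * ∏ j, (Polynomial.X - Polynomial.C (z j)) ^ m j)
    (σ : Fin k → ℝ)
    (hσ1 : ∀ i j, j ≠ i → σ i ≤ ‖z i - z j‖)
    (hσ2 : ∀ i, ∃ j, j ≠ i ∧ σ i = ‖z i - z j‖)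
    (zt : Fin k → ℂ) (hzt : ∀ i, ‖zt i - z i‖ < σ i / (64 * n))
    (zh : Fin n → ℂ) (ι : Fin n → Fin k)
    (hι : ∀ j, (Finset.univ.filter fun ℓ => ι ℓ = j).card = m j)
    (hzh : ∀ ℓ, ‖zh ℓ - z (ι ℓ)‖ < σ (ι ℓ) / (64 * n)) :
    ∀ i : Fin k,
      ‖∏ j ∈ Finset.univ.erase i, (z i - z j) ^ m j‖ / 2
          < ‖∏ ℓ ∈ Finset.univ.filter (fun ℓ => ι ℓ ≠ i), (zt i - zh ℓ)‖
      ∧ ‖∏ ℓ ∈ Finset.univ.filter (fun ℓ => ι ℓ ≠ i), (zt i - zh ℓ)‖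
          < 2 * ‖∏ j ∈ Finset.univ.erase i, (z i - z j) ^ m j‖ := by
  intro i
  classical
  set S : Finset (Fin n) := Finset.univ.filter (fun ℓ => ι ℓ ≠ i) with hSdef
  have hScard : S.card ≤ n := by
    calc S.card ≤ (Finset.univ : Finset (Fin n)).card := Finset.card_filter_le _ _
      _ = n := by simp
  have hmaps : ∀ ℓ ∈ S, ι ℓ ∈ Finset.univ.erase i := by
    intro ℓ hℓ
    have : ι ℓ ≠ i := by simpa [hSdef] using hℓ
    simp [Finset.mem_erase, this]
  have key : ∏ j ∈ Finset.univ.erase i, (z i - z j) ^ m j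
      = ∏ ℓ ∈ S, (z i - z (ι ℓ)) := by
    rw [← Finset.prod_fiberwise_of_maps_to hmaps (fun ℓ => z i - z (ι ℓ))]
    refine Finset.prod_congr rfl (fun j hj => ?_)
    symm
    have hji : j ≠ i := (Finset.mem_erase.mp hj).1
    have hfil : S.filter (fun ℓ => ι ℓ = j) = Finset.univ.filter (fun ℓ => ι ℓ = j) := by
      ext ℓ
      simp only [hSdef, Finset.mem_filter, Finset.mem_univ, true_and]
      constructor
      · rintro ⟨_, h2⟩; exact h2
      · intro h2; exact ⟨h2 ▸ hji, h2⟩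
    calc ∏ ℓ ∈ S.filter (fun ℓ => ι ℓ = j), (z i - z (ι ℓ))
        = ∏ ℓ ∈ S.filter (fun ℓ => ι ℓ = j), (z i - z j) :=
          Finset.prod_congr rfl (fun ℓ hℓ => by rw [(Finset.mem_filter.mp hℓ).2])
      _ = (z i - z j) ^ m j := by rw [Finset.prod_const, hfil, hι j]
  have hbound : ∀ ℓ ∈ S, ‖(zt i - zh ℓ) - (z i - z (ι ℓ))‖
      < ‖z i - z (ι ℓ)‖ / (32 * n) := by
    intro ℓ hℓ
    have hℓi : ι ℓ ≠ i := by simpa [hSdef] using hℓ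
    have h1 := hzt i
    have h2 := hzh ℓ
    have h3 : σ i ≤ ‖z i - z (ι ℓ)‖ := hσ1 i (ι ℓ) hℓi
    have h4 : σ (ι ℓ) ≤ ‖z i - z (ι ℓ)‖ := by
      rw [← norm_sub_rev]
      exact hσ1 (ι ℓ) i (Ne.symm hℓi)
    have h5 : ‖(zt i - zh ℓ) - (z i - z (ι ℓ))‖
        ≤ ‖zt i - z i‖ + ‖zh ℓ - z (ι ℓ)‖ := by
      calc ‖(zt i - zh ℓ) - (z i - z (ι ℓ))‖
          = ‖(zt i - z i) + (z (ι ℓ) - zh ℓ)‖ := by congr 1; ring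
        _ ≤ ‖zt i - z i‖ + ‖z (ι ℓ) - zh ℓ‖ := norm_add_le _ _
        _ = _ := by rw [norm_sub_rev (z (ι ℓ)) (zh ℓ)]
    have hn0 : (0:ℝ) < (64:ℝ) * n := by positivity
    have h6 : σ i / (64 * n) ≤ ‖z i - z (ι ℓ)‖ / (64 * n) := by gcongr
    have h7 : σ (ι ℓ) / (64 * n) ≤ ‖z i - z (ι ℓ)‖ / (64 * n) := by gcongr
    have h8 : ‖z i - z (ι ℓ)‖ / (64 * n) + ‖z i - z (ι ℓ)‖ / (64 * n)
        = ‖z i - z (ι ℓ)‖ / (32 * n) := by ring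
    linarith
  have := aux13 n hn S hScard (fun ℓ => z i - z (ι ℓ)) (fun ℓ => zt i - zh ℓ) hbound
  rw [key]
  exact this
end

section
/- Let p = p_n·∏_{j=1}^k (X − z_j)^{m_j} ∈ ℂ[X] be of degree n with p_n ≠ 0 and k ≥ 2 distinct roots, and suppose |z_j| ≤ 2^Γ for all j, where Γ ≥ 0 is a real number. Fix i ∈ {1,…,k}, let 0 < d ≤ 1, let t be a nonnegative integer with t ≤ n − m_i, and suppose there is a set J ⊆ {1,…,k}\{i} with Σ_{j∈J} m_j ≥ t such that |z_i − z_j| ≤ d for all j ∈ J. Then P_i := ∏_{j≠i} (z_i − z_j)^{m_j} satisfies |P_i| ≤ d^t · 2^{(Γ+1)(n − m_i − t)}. -/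
/-- The product bound used in the correctness proof of the clustering step:
if at least `t` roots (counted with multiplicity) other than `z_i` lie within
distance `d ≤ 1` of `z_i` and all roots have modulus at most `2^Γ`, then
`|P_i| ≤ d^t · 2^{(Γ+1)(n−m_i−t)}`. -/
theorem stmt16 (n k : ℕ) (hk : 2 ≤ k)
    (c : ℂ) (hc : c ≠ 0)
    (z : Fin k → ℂ) (hz : Function.Injective z)
    (m : Fin k → ℕ) (hm : ∀ j, 1 ≤ m j) (hsum : ∑ j, m j = n)
    (p : Polynomial ℂ)
    (hp : p = Polynomial.C c * ∏ j, (Polynomial.X - Polynomial.C (z j)) ^ m j)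
    (Γ : ℝ) (hΓ : 0 ≤ Γ) (hroot : ∀ j, ‖z j‖ ≤ 2 ^ Γ)
    (i : Fin k) (d : ℝ) (hd0 : 0 < d) (hd1 : d ≤ 1)
    (t : ℕ) (ht : t ≤ n - m i)
    (J : Finset (Fin k)) (hJi : i ∉ J)
    (hJt : t ≤ ∑ j ∈ J, m j)
    (hJd : ∀ j ∈ J, ‖z i - z j‖ ≤ d) :
    ‖∏ j ∈ Finset.univ.erase i, (z i - z j) ^ m j‖
      ≤ d ^ t * 2 ^ ((Γ + 1) * ((n : ℝ) - (m i : ℝ) - (t : ℝ))) := by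
  classical
  set A := Finset.univ.erase i with hA
  have hJA : J ⊆ A := fun j hj =>
    Finset.mem_erase.2 ⟨fun h => hJi (h ▸ hj), Finset.mem_univ j⟩
  set C : ℝ := 2 ^ (Γ + 1 : ℝ) with hC
  have hC1 : (1 : ℝ) ≤ C := Real.one_le_rpow one_le_two (by linarith)
  have hC0 : (0 : ℝ) ≤ C := le_trans zero_le_one hC1
  have hdC : d ≤ C := le_trans hd1 hC1
  have hbound : ∀ j, ‖z i - z j‖ ≤ C := by
    intro j
    have h1 : ‖z i - z j‖ ≤ ‖z i‖ + ‖z j‖ :=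
      norm_sub_le _ _
    have h2 : ‖z i‖ + ‖z j‖ ≤ 2 ^ Γ + 2 ^ Γ :=
      add_le_add (hroot i) (hroot j)
    have h3 : (2 : ℝ) ^ Γ + 2 ^ Γ = C := by
      rw [hC, Real.rpow_add two_pos, Real.rpow_one]; ring
    linarith
  have key1 : ‖∏ j ∈ J, (z i - z j) ^ m j‖ ≤ d ^ (∑ j ∈ J, m j) := by
    rw [norm_prod, ← Finset.prod_pow_eq_pow_sum]
    refine Finset.prod_le_prod (fun j _ => by positivity) (fun j hj => ?_)
    rw [norm_pow]
    exact pow_le_pow_left₀ (norm_nonneg _) (hJd j hj) _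
  have key2 : ‖∏ j ∈ A \ J, (z i - z j) ^ m j‖ ≤ C ^ (∑ j ∈ A \ J, m j) := by
    rw [norm_prod, ← Finset.prod_pow_eq_pow_sum]
    refine Finset.prod_le_prod (fun j _ => by positivity) (fun j _ => ?_)
    rw [norm_pow]
    exact pow_le_pow_left₀ (norm_nonneg _) (hbound j) _
  have hmi : m i ≤ n := by
    rw [← hsum]
    exact Finset.single_le_sum (fun j _ => Nat.zero_le _) (Finset.mem_univ i)
  have hAsum : ∑ j ∈ A, m j = n - m i := by
    have h := Finset.sum_erase_add Finset.univ m (Finset.mem_univ i)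
    rw [hsum] at h
    rw [hA]
    omega
  have hST : ∑ j ∈ A \ J, m j + ∑ j ∈ J, m j = n - m i := by
    rw [← hAsum, Finset.sum_sdiff hJA]
  have hprod : (∏ j ∈ A, (z i - z j) ^ m j)
      = (∏ j ∈ A \ J, (z i - z j) ^ m j) * ∏ j ∈ J, (z i - z j) ^ m j :=
    (Finset.prod_sdiff hJA).symm
  have hdS : d ^ (∑ j ∈ J, m j) ≤ d ^ t * C ^ (∑ j ∈ J, m j - t) := by
    have : d ^ (∑ j ∈ J, m j) = d ^ t * d ^ (∑ j ∈ J, m j - t) := by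
      rw [← pow_add]; congr 1; omega
    rw [this]
    exact mul_le_mul_of_nonneg_left (pow_le_pow_left₀ hd0.le hdC _) (by positivity)
  have hfinal : ‖∏ j ∈ A, (z i - z j) ^ m j‖
      ≤ d ^ t * C ^ (n - m i - t) := by
    rw [hprod, norm_mul]
    calc ‖∏ j ∈ A \ J, (z i - z j) ^ m j‖ *
            ‖∏ j ∈ J, (z i - z j) ^ m j‖
        ≤ C ^ (∑ j ∈ A \ J, m j) * (d ^ t * C ^ (∑ j ∈ J, m j - t)) := by
          exact mul_le_mul key2 (key1.trans hdS) (norm_nonneg _) (by positivity)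
      _ = d ^ t * C ^ (∑ j ∈ A \ J, m j + (∑ j ∈ J, m j - t)) := by
          rw [pow_add]; ring
      _ = d ^ t * C ^ (n - m i - t) := by congr 2; omega
  refine hfinal.trans (le_of_eq ?_)
  congr 1
  rw [hC, ← Real.rpow_natCast (2 ^ (Γ + 1 : ℝ)) (n - m i - t), ← Real.rpow_mul (by norm_num)]
  congr 1
  have : ((n - m i - t : ℕ) : ℝ) = (n : ℝ) - (m i : ℝ) - (t : ℝ) := by
    have : t ≤ n - m i := ht
    push_cast [Nat.cast_sub (by omega : t ≤ n - m i), Nat.cast_sub hmi]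
    ring
  rw [this]
end
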